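/- arXiv:2005.05881 — 11 statements merged into one kernel-verified Lean document; each statement's English description precedes it below -/
import Mathlib

section
/- Let ℓ be an odd prime and γ ∈ GL₂(𝔽_ℓ). Then γ has an eigenvalue in 𝔽_ℓ if and only if γ² has an eigenvalue in 𝔽_ℓ and γ² is not a scalar matrix a·I with a a non-square in 𝔽_ℓ^×. -/
/-!
Eigenvalues are read as points of the spectrum of `M` in the algebra `Matrix (Fin 2) (Fin 2) K`. If `a` is an eigenvalue of `M`, then
`a ^ 2` is one of `M ^ 2`, and if `M ^ 2 = b • 1` the only eigenvalue of `M ^ 2` is `b`, so `b = a ^ 2`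
is a square. Conversely, Cayley–Hamilton gives `M ^ 2 = t • M - d • 1` with `t = tr M`, `d = det M`.
If `t ≠ 0`, then `M = t⁻¹ • (M ^ 2 + d • 1)` is a polynomial in `M ^ 2`, so spectral mapping turns an
eigenvalue `a` of `M ^ 2` into the eigenvalue `(a + d) / t` of `M`. If `t = 0`, then `M ^ 2 = -d • 1`,
so `-d = r * r` is a square and `r` is a root of the characteristic polynomial `X ^ 2 + d`.
-/

open Polynomial

theorem spectrum.pow_eq_of_pow_eq_algebraMap {𝕜 A : Type*} [Field 𝕜] [Ring A] [Nontrivial A]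
    [Algebra 𝕜 A] {x : A} {a b : 𝕜} (n : ℕ) (ha : a ∈ spectrum 𝕜 x)
    (hx : x ^ n = algebraMap 𝕜 A b) : a ^ n = b := by
  have := spectrum.pow_mem_pow x n ha
  rwa [hx, spectrum.scalar_eq, Set.mem_singleton_iff] at this

namespace Matrix

variable {K : Type*} [Field K]

theorem sq_fin_two_eq_trace_smul_sub_det_smul {R : Type*} [CommRing R]
    (M : Matrix (Fin 2) (Fin 2) R) : M ^ 2 = M.trace • M - M.det • 1 := by
  ext i j
  fin_cases i <;> fin_cases j <;>
    simp [sq, mul_apply, trace_fin_two, det_fin_two] <;> ring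

theorem mem_spectrum_of_sq_of_trace_ne_zero {M : Matrix (Fin 2) (Fin 2) K} (ht : M.trace ≠ 0)
    {a : K} (ha : a ∈ spectrum K (M ^ 2)) : (a + M.det) / M.trace ∈ spectrum K M := by
  have hM : M = aeval (M ^ 2) (C M.trace⁻¹ * (X + C M.det)) := by
    simp only [map_mul, map_add, aeval_C, aeval_X, Algebra.algebraMap_eq_smul_one,
      sq_fin_two_eq_trace_smul_sub_det_smul M, smul_mul_assoc, one_mul, sub_add_cancel,
      smul_smul, inv_mul_cancel₀ ht, one_smul]
  have := spectrum.subset_polynomial_aeval (M ^ 2) (C M.trace⁻¹ * (X + C M.det)) ⟨a, ha, rfl⟩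
  rw [← hM] at this
  simpa [div_eq_inv_mul] using this

theorem mem_spectrum_of_trace_eq_zero {M : Matrix (Fin 2) (Fin 2) K} (ht : M.trace = 0)
    {r : K} (hr : -M.det = r * r) : r ∈ spectrum K M := by
  rw [mem_spectrum_iff_isRoot_charpoly, charpoly_fin_two, IsRoot, ht]
  simp only [eval_add, eval_sub, eval_pow, eval_X, eval_mul, eval_C]
  linear_combination -hr

theorem exists_mem_spectrum_iff_sq (M : Matrix (Fin 2) (Fin 2) K) :
    (∃ a, a ∈ spectrum K M) ↔
      (∃ a, a ∈ spectrum K (M ^ 2)) ∧ ¬∃ b : K, ¬IsSquare b ∧ M ^ 2 = b • 1 := by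
  constructor
  · rintro ⟨a, ha⟩
    refine ⟨⟨a ^ 2, spectrum.pow_mem_pow M 2 ha⟩, ?_⟩
    rintro ⟨b, hb, hM⟩
    rw [← Algebra.algebraMap_eq_smul_one] at hM
    exact hb ⟨a, by rw [← spectrum.pow_eq_of_pow_eq_algebraMap 2 ha hM, sq]⟩
  · rintro ⟨⟨a, ha⟩, hns⟩
    by_cases ht : M.trace = 0
    · obtain ⟨r, hr⟩ : IsSquare (-M.det) := by
        refine not_not.mp fun hd => hns ⟨-M.det, hd, ?_⟩
        rw [sq_fin_two_eq_trace_smul_sub_det_smul, ht, zero_smul, zero_sub, neg_smul]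
      exact ⟨r, mem_spectrum_of_trace_eq_zero ht hr⟩
    · exact ⟨_, mem_spectrum_of_sq_of_trace_ne_zero ht ha⟩

end Matrix

theorem stmt_2_general (ℓ : ℕ) [Fact (Nat.Prime ℓ)]
    (γ : GL (Fin 2) (ZMod ℓ)) :
    (∃ a : ZMod ℓ, (Matrix.charpoly ((γ : Matrix (Fin 2) (Fin 2) (ZMod ℓ)))).IsRoot a) ↔
      ((∃ a : ZMod ℓ,
          (Matrix.charpoly (((γ ^ 2 : GL (Fin 2) (ZMod ℓ)) :
            Matrix (Fin 2) (Fin 2) (ZMod ℓ)))).IsRoot a) ∧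
        ¬ ∃ a : ZMod ℓ, a ≠ 0 ∧ ¬ IsSquare a ∧
          ((γ ^ 2 : GL (Fin 2) (ZMod ℓ)) : Matrix (Fin 2) (Fin 2) (ZMod ℓ)) = a • 1) := by
  have hne : ∀ a : ZMod ℓ, ¬IsSquare a → a ≠ 0 := by
    rintro a ha rfl
    exact ha IsSquare.zero
  simp only [← Matrix.mem_spectrum_iff_isRoot_charpoly, Units.val_pow_eq_pow_val]
  rw [Matrix.exists_mem_spectrum_iff_sq]
  exact and_congr_right fun _ =>
    not_congr (exists_congr fun a => ⟨fun h => ⟨hne a h.1, h⟩, fun h => h.2⟩)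

theorem stmt_2 (ℓ : ℕ) [Fact (Nat.Prime ℓ)] (hodd : Odd ℓ)
    (γ : GL (Fin 2) (ZMod ℓ)) :
    (∃ a : ZMod ℓ, (Matrix.charpoly ((γ : Matrix (Fin 2) (Fin 2) (ZMod ℓ)))).IsRoot a) ↔
      ((∃ a : ZMod ℓ,
          (Matrix.charpoly (((γ ^ 2 : GL (Fin 2) (ZMod ℓ)) :
            Matrix (Fin 2) (Fin 2) (ZMod ℓ)))).IsRoot a) ∧
        ¬ ∃ a : ZMod ℓ, a ≠ 0 ∧ ¬ IsSquare a ∧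
          ((γ ^ 2 : GL (Fin 2) (ZMod ℓ)) : Matrix (Fin 2) (Fin 2) (ZMod ℓ)) = a • 1) :=
  stmt_2_general ℓ γ
end

section
/- Let ℓ be an odd prime. The proportion of matrices in SL₂(𝔽_ℓ) having an eigenvalue in 𝔽_ℓ equals (ℓ+3)/(2(ℓ+1)). -/
/-! For `γ ∈ SL₂(F)` the characteristic polynomial is `X² - tX + 1` with `t = tr γ`, so having an
eigenvalue depends only on the trace. Writing `γ = !![a, b; c, t - a]`, the condition on `(b, c)`
is `bc = a(t - a) - 1`, which has `q - 1` solutions, plus `q` more when `a` is a root of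
`X² - tX + 1`; so there are `q(q - 1) + q r(t)` elements of trace `t`, `r(t)` being the number of
roots. Each `x ≠ 0` is a root for exactly one `t`, namely `x + x⁻¹`, so `∑ r(t) = q - 1`; the roots
for `t` are `x` and `t - x`, which coincide only for `t = ±2`, so `(q + 1) / 2` traces have a root.
Summing over traces gives `|SL₂(F)| = q(q - 1)(q + 1)` and `q(q - 1)(q + 3) / 2` elements with an
eigenvalue. -/

open Finset Polynomial Matrix
open scoped MatrixGroups

variable {F : Type*} [Field F] [Fintype F] [DecidableEq F]

lemma card_filter_mul_eq (e : F) :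
    #{p : F × F | p.1 * p.2 = e} = Fintype.card F - 1 + if e = 0 then Fintype.card F else 0 := by
  have h_unit (b : F) (hb : b ≠ 0) : #{c : F | b * c = e} = 1 :=
    card_eq_one.mpr ⟨e / b, by ext c; simp [eq_div_iff hb, mul_comm]⟩
  have h_zero : #{c : F | 0 * c = e} = if e = 0 then Fintype.card F else 0 := by
    split_ifs with he <;> simp [he, eq_comm]
  have h_fib : #{p : F × F | p.1 * p.2 = e} = ∑ b, #{c : F | b * c = e} := by
    simp only [card_filter, Fintype.sum_prod_type]
  rw [h_fib, ← add_sum_erase _ _ (mem_univ 0), h_zero,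
    sum_congr rfl fun b hb => h_unit b (ne_of_mem_erase hb), sum_const,
    card_erase_of_mem (mem_univ _), card_univ, smul_eq_mul, mul_one, add_comm]

def traceRoots (t : F) : Finset F := {x | x ^ 2 - t * x + 1 = 0}

lemma isRoot_charpoly_iff_mem_traceRoots (γ : SL(2, F)) (a : F) :
    (γ : Matrix (Fin 2) (Fin 2) F).charpoly.IsRoot a ↔
      a ∈ traceRoots (γ : Matrix (Fin 2) (Fin 2) F).trace := by
  simp [traceRoots, charpoly_fin_two]

lemma card_filter_trace_eq_and_apply_zero_zero_eq (t a : F) :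
    #{γ : SL(2, F) | (γ : Matrix (Fin 2) (Fin 2) F).trace = t ∧ γ 0 0 = a}
      = #{p : F × F | p.1 * p.2 = a * (t - a) - 1} := by
  refine card_bij' (fun γ _ => (γ 0 1, γ 1 0))
    (fun p hp => (⟨!![a, p.1; p.2, t - a], by simp [det_fin_two, (mem_filter_univ p).mp hp]⟩ : SL(2, F)))
    ?_ ?_ ?_ ?_
  · intro γ hγ
    simp only [mem_filter, mem_univ, true_and, trace_fin_two] at hγ ⊢
    have := γ.det_coe
    rw [det_fin_two] at this
    obtain ⟨ht, rfl⟩ := hγ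
    linear_combination -this + γ 0 0 * ht
  · intro p _
    refine mem_filter.mpr ⟨mem_univ _, ?_⟩
    simp [trace_fin_two]
  · intro γ hγ
    simp only [mem_filter, mem_univ, true_and, trace_fin_two] at hγ
    ext i j
    fin_cases i <;> fin_cases j <;> simp [hγ.2, ← hγ.1]
  · simp

lemma card_filter_trace_eq (t : F) :
    #{γ : SL(2, F) | (γ : Matrix (Fin 2) (Fin 2) F).trace = t}
      = Fintype.card F * (Fintype.card F - 1) + Fintype.card F * #(traceRoots t) := by
  rw [card_eq_sum_card_fiberwise (f := fun γ : SL(2, F) => γ 0 0) (t := univ)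
    (fun _ _ => mem_univ _)]
  simp only [filter_filter, card_filter_trace_eq_and_apply_zero_zero_eq, card_filter_mul_eq,
    sum_add_distrib, sum_const, card_univ, smul_eq_mul]
  have h_roots : ({x | x * (t - x) - 1 = 0} : Finset F) = traceRoots t :=
    filter_congr fun x _ => by constructor <;> intro h <;> linear_combination -h
  rw [← sum_filter, h_roots, sum_const, smul_eq_mul]
  ring

lemma sum_card_traceRoots : ∑ t : F, #(traceRoots t) = Fintype.card F - 1 := by
  have h_unit (x : F) (hx : x ≠ 0) : #{t : F | x ^ 2 - t * x + 1 = 0} = 1 :=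
    card_eq_one.mpr ⟨(x ^ 2 + 1) / x, by
      ext t; simp only [mem_filter_univ, mem_singleton, eq_div_iff hx]
      constructor <;> intro h <;> linear_combination -h⟩
  have h_zero : #{t : F | (0 : F) ^ 2 - t * 0 + 1 = 0} = 0 := by simp
  simp only [traceRoots, card_filter]
  rw [sum_comm]
  simp only [← card_filter]
  rw [← add_sum_erase _ _ (mem_univ 0), h_zero,
    sum_congr rfl fun x hx => h_unit x (ne_of_mem_erase hx), sum_const,
    card_erase_of_mem (mem_univ _), card_univ, smul_eq_mul, mul_one, zero_add]

lemma traceRoots_eq_pair {t x : F} (hx : x ∈ traceRoots t) : traceRoots t = {x, t - x} := by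
  simp only [traceRoots, mem_filter_univ] at hx
  ext y
  simp only [traceRoots, mem_filter_univ, mem_insert, mem_singleton]
  constructor
  · intro hy
    have : (y - x) * (y - (t - x)) = 0 := by linear_combination hy - hx
    rcases mul_eq_zero.mp this with h | h
    · exact .inl (sub_eq_zero.mp h)
    · exact .inr (sub_eq_zero.mp h)
  · rintro (rfl | rfl)
    · exact hx
    · linear_combination hx

lemma eq_sub_self_iff_of_mem_traceRoots {t x : F} (hx : x ∈ traceRoots t) :
    x = t - x ↔ t = 2 ∨ t = -2 := by
  simp only [traceRoots, mem_filter_univ] at hx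
  constructor
  · intro h
    have : (x - 1) * (x + 1) = 0 := by linear_combination -hx + x * h
    rcases mul_eq_zero.mp this with h' | h'
    · exact .inl (by linear_combination -h + 2 * h')
    · exact .inr (by linear_combination -h + 2 * h')
  · rintro (rfl | rfl)
    · have : (x - 1) ^ 2 = 0 := by linear_combination hx
      linear_combination 2 * (pow_eq_zero_iff two_ne_zero).mp this
    · have : (x + 1) ^ 2 = 0 := by linear_combination hx
      linear_combination 2 * (pow_eq_zero_iff two_ne_zero).mp this

lemma card_traceRoots_of_nonempty {t : F} (h : (traceRoots t).Nonempty) :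
    #(traceRoots t) = if t = 2 ∨ t = -2 then 1 else 2 := by
  obtain ⟨x, hx⟩ := h
  rw [traceRoots_eq_pair hx]
  by_cases h : x = t - x
  · rw [if_pos ((eq_sub_self_iff_of_mem_traceRoots hx).mp h), ← h, pair_eq_singleton,
      card_singleton]
  · rw [if_neg (mt (eq_sub_self_iff_of_mem_traceRoots hx).mpr h), card_pair h]

lemma sum_card_traceRoots_of_nonempty :
    ∑ t ∈ {t : F | (traceRoots t).Nonempty}, #(traceRoots t) = Fintype.card F - 1 := by
  rw [sum_filter_of_ne fun t _ h => card_pos.mp (Nat.pos_of_ne_zero h), sum_card_traceRoots]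

lemma two_mul_card_filter_traceRoots_nonempty (hF : ringChar F ≠ 2) :
    2 * #{t : F | (traceRoots t).Nonempty} = Fintype.card F + 1 := by
  have h_two_ne : (2 : F) ≠ -2 := fun h =>
    Ring.two_ne_zero hF ((Ring.eq_self_iff_eq_zero_of_char_ne_two hF).mp h.symm)
  have h_pm_two :
      ({t : F | (traceRoots t).Nonempty ∧ (t = 2 ∨ t = -2)} : Finset F) = {2, -2} := by
    ext t
    simp only [mem_filter_univ, mem_insert, mem_singleton, and_iff_right_iff_imp]
    rintro (rfl | rfl)
    · exact ⟨1, (mem_filter_univ _).mpr (by norm_num)⟩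
    · exact ⟨-1, (mem_filter_univ _).mpr (by norm_num)⟩
  have h_sum := sum_card_traceRoots_of_nonempty (F := F)
  rw [sum_congr rfl fun t ht => card_traceRoots_of_nonempty ((mem_filter_univ t).mp ht), sum_ite,
    sum_const, sum_const, filter_filter, h_pm_two, card_pair h_two_ne, smul_eq_mul,
    smul_eq_mul] at h_sum
  have h_split := card_filter_add_card_filter_not (s := {t : F | (traceRoots t).Nonempty})
    (p := fun t => t = 2 ∨ t = -2)
  rw [filter_filter, h_pm_two, card_pair h_two_ne] at h_split
  have := Fintype.card_pos (α := F)
  omega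

lemma card_SL_two :
    Fintype.card SL(2, F) = Fintype.card F * (Fintype.card F - 1) * (Fintype.card F + 1) := by
  rw [← card_univ, card_eq_sum_card_fiberwise (t := univ) (fun _ _ => mem_univ _)
    (f := fun γ : SL(2, F) => (γ : Matrix (Fin 2) (Fin 2) F).trace)]
  simp only [card_filter_trace_eq, sum_add_distrib, sum_const, card_univ, smul_eq_mul, ← mul_sum,
    sum_card_traceRoots]
  ring

lemma two_mul_card_filter_exists_isRoot_charpoly (hF : ringChar F ≠ 2) :
    2 * #{γ : SL(2, F) | ∃ a, (γ : Matrix (Fin 2) (Fin 2) F).charpoly.IsRoot a}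
      = Fintype.card F * (Fintype.card F - 1) * (Fintype.card F + 3) := by
  have h_iff (γ : SL(2, F)) : (∃ a, (γ : Matrix (Fin 2) (Fin 2) F).charpoly.IsRoot a) ↔
      (γ : Matrix (Fin 2) (Fin 2) F).trace ∈ ({t | (traceRoots t).Nonempty} : Finset F) := by
    rw [mem_filter_univ]
    exact exists_congr (isRoot_charpoly_iff_mem_traceRoots γ)
  rw [filter_congr fun γ _ => h_iff γ, ← sum_card_fiberwise_eq_card_filter]
  simp only [card_filter_trace_eq, sum_add_distrib, sum_const, smul_eq_mul, ← mul_sum,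
    sum_card_traceRoots_of_nonempty]
  rw [mul_add, ← mul_assoc, two_mul_card_filter_traceRoots_nonempty hF]
  ring

theorem stmt_7 (ℓ : ℕ) [Fact (Nat.Prime ℓ)] (hodd : Odd ℓ) :
    (Nat.card {γ : Matrix.SpecialLinearGroup (Fin 2) (ZMod ℓ) //
        ∃ a : ZMod ℓ, (Matrix.charpoly (γ : Matrix (Fin 2) (Fin 2) (ZMod ℓ))).IsRoot a} : ℚ) /
      (Nat.card (Matrix.SpecialLinearGroup (Fin 2) (ZMod ℓ)) : ℚ) =
    ((ℓ : ℚ) + 3) / (2 * ((ℓ : ℚ) + 1)) := by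
  have hchar : ringChar (ZMod ℓ) ≠ 2 := by
    rw [ZMod.ringChar_zmod_n]; rintro rfl; exact absurd hodd (by decide)
  have h_roots := two_mul_card_filter_exists_isRoot_charpoly hchar
  rw [Nat.card_eq_fintype_card, Fintype.card_subtype, Nat.card_eq_fintype_card, card_SL_two,
    ZMod.card]
  rw [ZMod.card] at h_roots
  have hℓ : 1 ≤ ℓ := (Fact.out : ℓ.Prime).one_lt.le
  have h_roots_ℚ := congrArg (Nat.cast : ℕ → ℚ) h_roots
  push_cast [Nat.cast_sub hℓ] at h_roots_ℚ ⊢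
  have h_pred_ne_zero : (ℓ : ℚ) - 1 ≠ 0 :=
    sub_ne_zero.mpr (by exact_mod_cast (Fact.out : ℓ.Prime).one_lt.ne')
  rw [div_eq_div_iff (by positivity) (by positivity)]
  linear_combination (ℓ + 1 : ℚ) * h_roots_ℚ
end

section
/- Let ℓ be an odd prime. The proportion of matrices in GL₂(𝔽_ℓ) having an eigenvalue in 𝔽_ℓ equals (ℓ+2)/(2(ℓ+1)). -/
/-!
Over a field of odd characteristic a monic quadratic has a root exactly when its discriminant is a
square, so a matrix `!![a, b; c, d]` has an eigenvalue iff `(a - d) ^ 2 + 4 * b * c` is a square.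
For `b ≠ 0` this expression runs over the whole field as `c` does, and for `b = 0` it is a square;
hence exactly `(q - 1) * q ^ 2 * (q - 1) / 2` matrices have no eigenvalue, all of them invertible
(`0` is not an eigenvalue). It remains to subtract this from
`|GL₂(𝔽_q)| = (q ^ 2 - 1) * (q ^ 2 - q)`.
-/

open Polynomial

variable {F : Type*} [Field F]

lemma Nat.card_subtype_comp_add_mul {p : F → Prop} (k : F) {b : F} (hb : b ≠ 0) :
    Nat.card {c : F // p (k + b * c)} = Nat.card {u : F // p u} :=
  Nat.card_congr (((Equiv.mulLeft₀ b hb).trans (Equiv.addLeft k)).subtypeEquiv fun _ => Iff.rfl)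

lemma Units.card_subtype_val_eq {M : Type*} [Monoid M] {p : M → Prop}
    (hp : ∀ a, p a → IsUnit a) :
    Nat.card {u : Mˣ // p u} = Nat.card {a : M // p a} :=
  Nat.card_congr
    { toFun u := ⟨u.1, u.2⟩
      invFun a := ⟨(hp a a.2).unit, a.2⟩
      left_inv _ := Subtype.ext (Units.ext rfl)
      right_inv _ := rfl }

lemma FiniteField.two_mul_card_nonsquare_add_one [Fintype F] (hF : ringChar F ≠ 2) :
    2 * Nat.card {u : F // ¬IsSquare u} + 1 = Fintype.card F := by
  classical
  have hpoint : ∀ u : F, 1 - quadraticChar F u =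
      2 * (if ¬IsSquare u then 1 else 0) + (if u = 0 then 1 else 0) := by
    intro u
    by_cases hu : u = 0
    · simp [hu]
    by_cases hsq : IsSquare u
    · simp [hu, hsq, (quadraticChar_one_iff_isSquare hu).mpr hsq]
    · simp [hu, hsq, quadraticChar_neg_one_iff_not_isSquare.mpr hsq]
  have hsum : ∑ u : F, (1 - quadraticChar F u) = (Fintype.card F : ℤ) := by
    rw [Finset.sum_sub_distrib, quadraticChar_sum_zero hF]
    simp
  rw [Finset.sum_congr rfl fun u _ => hpoint u, Finset.sum_add_distrib, ← Finset.mul_sum,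
    Finset.sum_boole, Finset.sum_ite_eq'] at hsum
  simp only [Finset.mem_univ, if_true] at hsum
  rw [Nat.card_eq_fintype_card, Fintype.card_subtype]
  omega

namespace Matrix

lemma isUnit_of_not_isRoot_charpoly_zero {n : Type*} [Fintype n] [DecidableEq n]
    {A : Matrix n n F} (h : ¬A.charpoly.IsRoot 0) : IsUnit A := by
  rw [isUnit_iff_isUnit_det, isUnit_iff_ne_zero, det_eq_sign_charpoly_coeff,
    coeff_zero_eq_eval_zero]
  exact mul_ne_zero (pow_ne_zero _ (neg_ne_zero.mpr one_ne_zero)) h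

lemma exists_isRoot_charpoly_iff_isSquare_discr (hF : ringChar F ≠ 2)
    (A : Matrix (Fin 2) (Fin 2) F) :
    (∃ a, A.charpoly.IsRoot a) ↔ IsSquare A.discr := by
  have : NeZero (2 : F) := ⟨Ring.two_ne_zero hF⟩
  have hdiscr : A.discr = discrim 1 (-A.trace) A.det := by
    rw [discr_fin_two, discrim]
    ring
  have hroot : ∀ a, A.charpoly.IsRoot a ↔ 1 * (a * a) + -A.trace * a + A.det = 0 := by
    intro a
    rw [charpoly_fin_two, IsRoot.def]
    simp only [eval_add, eval_sub, eval_mul, eval_pow, eval_X, eval_C]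
    ring_nf
  simp_rw [hroot, hdiscr]
  constructor
  · rintro ⟨a, ha⟩
    exact ⟨_, (discrim_eq_sq_of_quadratic_eq_zero ha).trans (sq _)⟩
  · exact exists_quadratic_eq_zero one_ne_zero

lemma discr_fin_two_eq (A : Matrix (Fin 2) (Fin 2) F) :
    A.discr = (A 0 0 - A 1 1) ^ 2 + 4 * A 0 1 * A 1 0 := by
  rw [discr_fin_two, trace_fin_two, det_fin_two]
  ring

-- The entry `A 1 0` is split off last, so that it is the innermost variable of summation.
def finTwoEquiv : Matrix (Fin 2) (Fin 2) F ≃ (F × F × F) × F where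
  toFun A := ((A 0 1, A 0 0, A 1 1), A 1 0)
  invFun x := !![x.1.2.1, x.1.1; x.2, x.1.2.2]
  left_inv A := by ext i j; fin_cases i <;> fin_cases j <;> rfl
  right_inv _ := rfl

lemma card_not_isSquare_discr [Fintype F] (hF : ringChar F ≠ 2) :
    Nat.card {A : Matrix (Fin 2) (Fin 2) F // ¬IsSquare A.discr} =
      (Fintype.card F - 1) * Fintype.card F ^ 2 * Nat.card {u : F // ¬IsSquare u} := by
  classical
  have h4 : (4 : F) ≠ 0 := by
    simpa [show (4 : F) = 2 * 2 by norm_num] using Ring.two_ne_zero hF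
  have hline : ∀ b a d : F, Nat.card {c : F // ¬IsSquare ((a - d) ^ 2 + 4 * b * c)} =
      if b = 0 then 0 else Nat.card {u : F // ¬IsSquare u} := by
    intro b a d
    split_ifs with hb
    · simp [hb, IsSquare.sq]
    · exact Nat.card_subtype_comp_add_mul (p := fun u => ¬IsSquare u) _ (mul_ne_zero h4 hb)
  let P : F × F × F → F → Prop := fun y c => ¬IsSquare ((y.2.1 - y.2.2) ^ 2 + 4 * y.1 * c)
  calc Nat.card {A : Matrix (Fin 2) (Fin 2) F // ¬IsSquare A.discr}
      = Nat.card {x : (F × F × F) × F // P x.1 x.2} :=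
        Nat.card_congr (finTwoEquiv.subtypeEquiv fun A => by rw [discr_fin_two_eq]; rfl)
    _ = ∑ y : F × F × F, Nat.card {c : F // P y c} := by
        rw [Nat.card_congr (Equiv.subtypeProdEquivSigmaSubtype P), Nat.card_sigma]
    _ = ∑ b : F, if b = 0 then 0 else Fintype.card F ^ 2 * Nat.card {u : F // ¬IsSquare u} := by
        simp only [P, hline, Fintype.sum_prod_type]
        refine Finset.sum_congr rfl fun b _ => ?_
        split_ifs <;> simp [sq, mul_assoc]
    _ = _ := by
        rw [Finset.sum_ite, Finset.sum_const_zero, zero_add, Finset.sum_const, Finset.filter_ne',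
          Finset.card_erase_of_mem (Finset.mem_univ _), Finset.card_univ, smul_eq_mul, mul_assoc]

lemma card_GL_not_exists_isRoot_charpoly [Fintype F] (hF : ringChar F ≠ 2) :
    Nat.card {γ : GL (Fin 2) F // ¬∃ a, (γ : Matrix (Fin 2) (Fin 2) F).charpoly.IsRoot a} =
      (Fintype.card F - 1) * Fintype.card F ^ 2 * Nat.card {u : F // ¬IsSquare u} := by
  refine (Units.card_subtype_val_eq
    (p := fun A : Matrix (Fin 2) (Fin 2) F => ¬∃ a, A.charpoly.IsRoot a)
    fun A hA => isUnit_of_not_isRoot_charpoly_zero fun h => hA ⟨0, h⟩).trans ?_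
  rw [← card_not_isSquare_discr hF]
  exact Nat.card_congr (Equiv.subtypeEquivRight fun A =>
    not_congr (exists_isRoot_charpoly_iff_isSquare_discr hF A))

lemma card_GL_exists_isRoot_charpoly [Fintype F] (hF : ringChar F ≠ 2) :
    (Nat.card {γ : GL (Fin 2) F // ∃ a, (γ : Matrix (Fin 2) (Fin 2) F).charpoly.IsRoot a} : ℚ) =
      Fintype.card F * (Fintype.card F - 1) ^ 2 * (Fintype.card F + 2) / 2 := by
  classical
  have hN := FiniteField.two_mul_card_nonsquare_add_one hF
  have hsplit := Nat.card_congr (Equiv.sumCompl fun γ : GL (Fin 2) F =>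
    ∃ a, (γ : Matrix (Fin 2) (Fin 2) F).charpoly.IsRoot a)
  rw [Nat.card_sum, card_GL_not_exists_isRoot_charpoly hF, card_GL_field, Fin.prod_univ_two]
    at hsplit
  simp only [Fin.val_zero, Fin.val_one, pow_zero, pow_one] at hsplit
  have hq : 1 ≤ Fintype.card F := Fintype.card_pos
  qify [hq, Nat.le_self_pow two_ne_zero (Fintype.card F), Nat.one_le_pow _ _ hq] at hN hsplit
  linear_combination hsplit - (Fintype.card F : ℚ) ^ 2 * (Fintype.card F - 1) / 2 * hN

end Matrix

theorem stmt_8 (ℓ : ℕ) [Fact (Nat.Prime ℓ)] (hodd : Odd ℓ) :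
    (Nat.card {γ : GL (Fin 2) (ZMod ℓ) //
        ∃ a : ZMod ℓ, (Matrix.charpoly ((γ : Matrix (Fin 2) (Fin 2) (ZMod ℓ)))).IsRoot a} : ℚ) /
      (Nat.card (GL (Fin 2) (ZMod ℓ)) : ℚ) =
    ((ℓ : ℚ) + 2) / (2 * ((ℓ : ℚ) + 1)) := by
  have hF : ringChar (ZMod ℓ) ≠ 2 := by
    rw [ZMod.ringChar_zmod_n]
    rintro rfl
    norm_num at hodd
  have hp : ℓ.Prime := Fact.out
  have hℓ : (2 : ℚ) ≤ ℓ := by exact_mod_cast hp.two_le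
  rw [Matrix.card_GL_exists_isRoot_charpoly hF, Matrix.card_GL_field, Fin.prod_univ_two, ZMod.card]
  simp only [Fin.val_zero, Fin.val_one, pow_zero, pow_one]
  rw [Nat.cast_mul, Nat.cast_sub (Nat.one_le_pow _ _ hp.pos),
    Nat.cast_sub (Nat.le_self_pow two_ne_zero ℓ)]
  push_cast
  rw [show ((ℓ : ℚ) ^ 2 - 1) * (ℓ ^ 2 - ℓ) = ℓ * (ℓ - 1) ^ 2 * (ℓ + 1) by ring]
  have : (ℓ : ℚ) - 1 ≠ 0 := by linarith
  field_simp
end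

section
/- Let ℓ be an odd prime and G ⊆ GL₂(𝔽_ℓ) a subgroup contained in the normalizer of the split Cartan subgroup but not in the split Cartan subgroup itself. Then the proportion of matrices in G with an eigenvalue in 𝔽_ℓ lies in the set {1/2, 3/4, 1}. -/
/-!
Every element of the normalizer `N` of the split Cartan subgroup is diagonal or antidiagonal,
which gives a sign character `σ : N → ℤˣ` whose kernel is the split Cartan subgroup. Diagonal
matrices have their diagonal entries as eigenvalues; an antidiagonal `γ` has characteristic
polynomial `X ^ 2 + det γ`, so it has an eigenvalue in `𝔽_ℓ` iff `-det γ` is a square, i.e. iff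
`χ (det γ) = χ (-1)⁻¹` for the quadratic character `χ`. Hence the elements of `G` without
eigenvalue form one fibre of the homomorphism `(σ, χ ∘ det) : G → ℤˣ × ℤˣ`. That fibre is empty or
has `|G| / |image|` elements, and the image has order 2 or 4 because `σ` is nontrivial on `G`;
this gives the proportions `1`, `1/2` and `3/4`.
-/

open Matrix Polynomial

namespace MonoidHom

variable {G M : Type*} [Group G] [Group M]

theorem card_preimage_singleton_mul_card_range [Finite G] (f : G →* M) {m : M}
    (hm : m ∈ f.range) : Nat.card (f ⁻¹' {m}) * Nat.card f.range = Nat.card G := by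
  obtain ⟨g, rfl⟩ := hm
  rw [Nat.card_congr (f.fiberEquivKer g), ← Subgroup.index_ker, Subgroup.card_mul_index]

theorem card_range_eq_two_or_four (f : G →* ℤˣ × ℤˣ) (hf : f ≠ 1) :
    Nat.card f.range = 2 ∨ Nat.card f.range = 4 := by
  have hdvd : Nat.card f.range ∣ 4 := by
    simpa using f.range.card_subgroup_dvd_card
  have hne : Nat.card f.range ≠ 1 := by
    rwa [Ne, Subgroup.card_eq_one, range_eq_bot_iff]
  have hle := Nat.le_of_dvd (by norm_num) hdvd
  interval_cases h : Nat.card f.range <;> simp_all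

theorem card_apply_eq_one_or_apply_eq_div_card_mem [Finite G] (σ ψ : G →* ℤˣ) (hσ : σ ≠ 1)
    (v : ℤˣ) :
    (Nat.card {g // σ g = 1 ∨ ψ g = v} : ℚ) / Nat.card G ∈ ({1 / 2, 3 / 4, 1} : Set ℚ) := by
  set f := σ.prod ψ
  have hf : f ≠ 1 := fun h ↦ hσ (by simpa [f] using congrArg (MonoidHom.fst _ _).comp h)
  have hcompl : {g | σ g = 1 ∨ ψ g = v}ᶜ = f ⁻¹' {(-1, -v)} := by
    ext g
    simp [f, ← Int.units_ne_iff_eq_neg, Prod.ext_iff]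
  have hsum : Nat.card {g // σ g = 1 ∨ ψ g = v} + Nat.card (f ⁻¹' {(-1, -v)}) = Nat.card G := by
    change Nat.card ({g | σ g = 1 ∨ ψ g = v} : Set G) + _ = _
    rw [← hcompl, Nat.card_coe_set_eq, Nat.card_coe_set_eq, Set.ncard_add_ncard_compl]
  have hpos : (0 : ℚ) < Nat.card G := by exact_mod_cast Nat.card_pos
  rw [← hsum] at hpos ⊢
  push_cast at hpos ⊢
  by_cases hm : (-1, -v) ∈ f.range
  · have hmul := f.card_preimage_singleton_mul_card_range hm
    rw [← hsum] at hmul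
    rcases f.card_range_eq_two_or_four hf with h | h <;> rw [h] at hmul <;> qify at hmul
    · left
      rw [div_eq_div_iff hpos.ne' two_ne_zero]
      linarith
    · right; left
      rw [div_eq_div_iff hpos.ne' four_ne_zero]
      linarith
  · have hb : Nat.card (f ⁻¹' {(-1, -v)}) = 0 := by
      rw [Set.preimage_singleton_eq_empty.2 fun h ↦ hm (by simpa using h)]
      exact Nat.card_of_isEmpty
    right; right
    rw [hb, Nat.cast_zero, add_zero] at hpos ⊢
    exact div_self hpos.ne'

end MonoidHom

namespace Matrix

variable {R : Type*}

theorem isDiag_fin_two_iff [Zero R] {A : Matrix (Fin 2) (Fin 2) R} :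
    A.IsDiag ↔ A 0 1 = 0 ∧ A 1 0 = 0 := by
  refine ⟨fun h ↦ ⟨h (by decide), h (by decide)⟩, fun ⟨h01, h10⟩ i j hij ↦ ?_⟩
  fin_cases i <;> fin_cases j <;> simp_all

def IsAntidiag [Zero R] (A : Matrix (Fin 2) (Fin 2) R) : Prop :=
  A 0 0 = 0 ∧ A 1 1 = 0

theorem IsDiag.mul {n : Type*} [Fintype n] [DecidableEq n] [NonUnitalNonAssocSemiring R]
    {A B : Matrix n n R} (hA : A.IsDiag) (hB : B.IsDiag) : (A * B).IsDiag := by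
  rw [← hA.diagonal_diag, ← hB.diagonal_diag, diagonal_mul_diagonal]
  exact isDiag_diagonal _

section Semiring

variable [NonUnitalNonAssocSemiring R] {A B : Matrix (Fin 2) (Fin 2) R}

theorem IsDiag.mul_isAntidiag (hA : A.IsDiag) (hB : B.IsAntidiag) : (A * B).IsAntidiag := by
  rw [isDiag_fin_two_iff] at hA
  simp_all [IsAntidiag, mul_apply, Fin.sum_univ_two]

theorem IsAntidiag.mul_isDiag (hA : A.IsAntidiag) (hB : B.IsDiag) : (A * B).IsAntidiag := by
  rw [isDiag_fin_two_iff] at hB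
  simp_all [IsAntidiag, mul_apply, Fin.sum_univ_two]

theorem IsAntidiag.mul (hA : A.IsAntidiag) (hB : B.IsAntidiag) : (A * B).IsDiag := by
  rw [isDiag_fin_two_iff]
  simp_all [IsAntidiag, mul_apply, Fin.sum_univ_two]

end Semiring

section CommRing

variable [CommRing R] {A : Matrix (Fin 2) (Fin 2) R}

theorem IsAntidiag.smul (hA : A.IsAntidiag) (r : R) : (r • A).IsAntidiag := by
  simp_all [IsAntidiag]

theorem IsDiag.adjugate (hA : A.IsDiag) : A.adjugate.IsDiag := by
  rw [isDiag_fin_two_iff] at hA ⊢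
  simp [adjugate_fin_two, hA]

theorem IsAntidiag.adjugate (hA : A.IsAntidiag) : A.adjugate.IsAntidiag := by
  simp_all [IsAntidiag, adjugate_fin_two]

theorem IsAntidiag.det_eq (hA : A.IsAntidiag) : A.det = -(A 0 1 * A 1 0) := by
  simp [det_fin_two, hA.1, hA.2]

theorem IsAntidiag.not_isDiag [Nontrivial R] (hA : A.IsAntidiag) (hdet : IsUnit A.det) :
    ¬ A.IsDiag := fun hD ↦ by
  rw [isDiag_fin_two_iff] at hD
  simp [hA.det_eq, hD.1] at hdet

theorem IsDiag.isRoot_charpoly {n : Type*} [Fintype n] [DecidableEq n] {A : Matrix n n R}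
    (hA : A.IsDiag) (i : n) : A.charpoly.IsRoot (A i i) := by
  rw [← hA.diagonal_diag, charpoly_diagonal, IsRoot, eval_prod]
  exact Finset.prod_eq_zero (Finset.mem_univ i) (by simp)

theorem IsAntidiag.exists_isRoot_charpoly_iff [Nontrivial R] (hA : A.IsAntidiag) :
    (∃ a, A.charpoly.IsRoot a) ↔ IsSquare (-A.det) := by
  have htr : A.trace = 0 := by simp [trace_fin_two, hA.1, hA.2]
  simp only [charpoly_fin_two, htr, IsRoot, eval_add, eval_sub, eval_mul, eval_pow, eval_X,
    eval_C, zero_mul, sub_zero, IsSquare]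
  refine exists_congr fun a ↦ ?_
  rw [sq, add_eq_zero_iff_eq_neg, eq_comm]

end CommRing

end Matrix

section SplitCartan

variable (R : Type*) [CommRing R]

def splitCartanNormalizer : Subgroup (GL (Fin 2) R) where
  carrier :=
    {γ | (γ : Matrix (Fin 2) (Fin 2) R).IsDiag ∨ (γ : Matrix (Fin 2) (Fin 2) R).IsAntidiag}
  mul_mem' := by
    rintro γ δ (hγ | hγ) (hδ | hδ)
    exacts [.inl (hγ.mul hδ), .inr (hγ.mul_isAntidiag hδ), .inr (hγ.mul_isDiag hδ),
      .inl (hγ.mul hδ)]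
  one_mem' := .inl isDiag_one
  inv_mem' := by
    rintro γ (hγ | hγ) <;>
      simp only [Set.mem_ofPred_eq, GeneralLinearGroup.coe_inv, inv_def]
    exacts [.inl (hγ.adjugate.smul _), .inr (hγ.adjugate.smul _)]

end SplitCartan

theorem isSquare_neg_iff_quadraticChar_toUnitHom {F : Type*} [Field F] [Fintype F]
    [DecidableEq F] (u : Fˣ) :
    IsSquare (-(u : F)) ↔
      (quadraticChar F).toUnitHom u = ((quadraticChar F).toUnitHom (-1))⁻¹ := by
  rw [← quadraticChar_one_iff_isSquare (neg_ne_zero.2 u.ne_zero), eq_inv_iff_mul_eq_one,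
    ← map_mul, Units.ext_iff]
  simp

namespace splitCartanNormalizer

section Sign

variable {R : Type*} [CommRing R] [Nontrivial R]

theorem not_isDiag_iff {γ : GL (Fin 2) R}
    (hγ : γ ∈ splitCartanNormalizer R) :
    ¬ (γ : Matrix (Fin 2) (Fin 2) R).IsDiag ↔ (γ : Matrix (Fin 2) (Fin 2) R).IsAntidiag :=
  ⟨hγ.resolve_left, fun h ↦ h.not_isDiag (isUnits_det_units γ)⟩

open Classical in
noncomputable def sign : splitCartanNormalizer R →* ℤˣ :=
  MonoidHom.mk'
    (fun γ ↦ if ((γ : GL (Fin 2) R) : Matrix (Fin 2) (Fin 2) R).IsDiag then 1 else -1) <| by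
    rintro ⟨γ, hγ⟩ ⟨δ, hδ⟩
    have hγδ := (not_isDiag_iff (mul_mem hγ hδ)).2
    rcases id hγ with hD | hA <;> rcases id hδ with hD' | hA'
    · simp [hD, hD', hD.mul hD']
    · simpa [hD, (not_isDiag_iff hδ).2 hA'] using hγδ (hD.mul_isAntidiag hA')
    · simpa [(not_isDiag_iff hγ).2 hA, hD'] using hγδ (hA.mul_isDiag hD')
    · simp [(not_isDiag_iff hγ).2 hA, (not_isDiag_iff hδ).2 hA', hA.mul hA']

theorem sign_eq_one_iff {γ : splitCartanNormalizer R} :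
    sign γ = 1 ↔ ((γ : GL (Fin 2) R) : Matrix (Fin 2) (Fin 2) R).IsDiag := by
  simp [sign]

end Sign

theorem exists_isRoot_charpoly_iff {F : Type*} [Field F] [Fintype F]
    [DecidableEq F] (γ : splitCartanNormalizer F) :
    (∃ a, ((γ : GL (Fin 2) F) : Matrix (Fin 2) (Fin 2) F).charpoly.IsRoot a) ↔
      sign γ = 1 ∨ (quadraticChar F).toUnitHom (GeneralLinearGroup.det (γ : GL (Fin 2) F)) =
        ((quadraticChar F).toUnitHom (-1))⁻¹ := by
  rw [← isSquare_neg_iff_quadraticChar_toUnitHom, sign_eq_one_iff]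
  by_cases hD : ((γ : GL (Fin 2) F) : Matrix (Fin 2) (Fin 2) F).IsDiag
  · simpa [hD] using ⟨_, hD.isRoot_charpoly 0⟩
  · simpa [hD] using ((not_isDiag_iff γ.2).1 hD).exists_isRoot_charpoly_iff

end splitCartanNormalizer

theorem stmt_10_general (ℓ : ℕ) [Fact (Nat.Prime ℓ)]
    (G : Subgroup (GL (Fin 2) (ZMod ℓ)))
    (hnorm : ∀ γ ∈ G, Matrix.IsDiag ((γ : Matrix (Fin 2) (Fin 2) (ZMod ℓ))) ∨
      (((γ : Matrix (Fin 2) (Fin 2) (ZMod ℓ))) 0 0 = 0 ∧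
        ((γ : Matrix (Fin 2) (Fin 2) (ZMod ℓ))) 1 1 = 0))
    (hnot : ∃ γ ∈ G, ¬ Matrix.IsDiag ((γ : Matrix (Fin 2) (Fin 2) (ZMod ℓ)))) :
    (Nat.card {γ : G // ∃ a : ZMod ℓ,
        (Matrix.charpoly (((γ : GL (Fin 2) (ZMod ℓ)) :
          Matrix (Fin 2) (Fin 2) (ZMod ℓ)))).IsRoot a} : ℚ) / (Nat.card G : ℚ) ∈
      ({1 / 2, 3 / 4, 1} : Set ℚ) := by
  let ι : G →* splitCartanNormalizer (ZMod ℓ) := Subgroup.inclusion hnorm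
  let σ := (splitCartanNormalizer.sign).comp ι
  let ψ := (quadraticChar (ZMod ℓ)).toUnitHom.comp (GeneralLinearGroup.det.comp G.subtype)
  have hσ : σ ≠ 1 := by
    obtain ⟨γ, hγ, hD⟩ := hnot
    exact fun h ↦
      hD (splitCartanNormalizer.sign_eq_one_iff.1 (DFunLike.congr_fun h (⟨γ, hγ⟩ : G)))
  have hcard : Nat.card {γ : G // ∃ a : ZMod ℓ,
      (((γ : GL (Fin 2) (ZMod ℓ)) : Matrix (Fin 2) (Fin 2) (ZMod ℓ))).charpoly.IsRoot a} =
      Nat.card {γ // σ γ = 1 ∨ ψ γ = ((quadraticChar (ZMod ℓ)).toUnitHom (-1))⁻¹} :=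
    Nat.card_congr <| Equiv.subtypeEquivRight fun γ ↦
      splitCartanNormalizer.exists_isRoot_charpoly_iff (ι γ)
  rw [hcard]
  exact MonoidHom.card_apply_eq_one_or_apply_eq_div_card_mem σ ψ hσ _

theorem stmt_10 (ℓ : ℕ) [Fact (Nat.Prime ℓ)] (hodd : Odd ℓ)
    (G : Subgroup (GL (Fin 2) (ZMod ℓ)))
    (hnorm : ∀ γ ∈ G, Matrix.IsDiag ((γ : Matrix (Fin 2) (Fin 2) (ZMod ℓ))) ∨
      (((γ : Matrix (Fin 2) (Fin 2) (ZMod ℓ))) 0 0 = 0 ∧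
        ((γ : Matrix (Fin 2) (Fin 2) (ZMod ℓ))) 1 1 = 0))
    (hnot : ∃ γ ∈ G, ¬ Matrix.IsDiag ((γ : Matrix (Fin 2) (Fin 2) (ZMod ℓ)))) :
    (Nat.card {γ : G // ∃ a : ZMod ℓ,
        (Matrix.charpoly (((γ : GL (Fin 2) (ZMod ℓ)) :
          Matrix (Fin 2) (Fin 2) (ZMod ℓ)))).IsRoot a} : ℚ) / (Nat.card G : ℚ) ∈
      ({1 / 2, 3 / 4, 1} : Set ℚ) :=
  stmt_10_general ℓ G hnorm hnot
end

section
/- Let ℓ be an odd prime and G a subgroup of the nonsplit Cartan subgroup of GL₂(𝔽_ℓ). Then the proportion of matrices in G with an eigenvalue in 𝔽_ℓ equals 1/|Ḡ|, where Ḡ is the image of G in PGL₂(𝔽_ℓ). -/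
/-! An element `[[a, εb], [b, a]]` of the nonsplit Cartan subgroup has characteristic polynomial
`(X - a)² - εb²`, which has a root in `𝔽_ℓ` exactly when `b = 0`, i.e. exactly when the element is
scalar, i.e. central. So the matrices with an eigenvalue form the kernel of `G → Ḡ`, whose index
in `G` is `|Ḡ|`. -/

open Polynomial

theorem exists_isRoot_charpoly_cartan_iff {K : Type*} [Field K] {ε : K} (hε : ¬IsSquare ε)
    (a b : K) : (∃ r, (!![a, ε * b; b, a]).charpoly.IsRoot r) ↔ b = 0 := by
  simp only [Matrix.charpoly_fin_two, Matrix.trace_fin_two_of, Matrix.det_fin_two_of, IsRoot.def,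
    eval_add, eval_sub, eval_mul, eval_pow, eval_C, eval_X]
  constructor
  · rintro ⟨r, hr⟩
    by_contra hb
    exact hε ⟨(r - a) / b, by field_simp; linear_combination -hr⟩
  · rintro rfl
    exact ⟨a, by ring⟩

theorem mem_center_iff_of_val_eq_cartan {K : Type*} [Field K] {ε a b : K} {γ : GL (Fin 2) K}
    (hγ : (γ : Matrix (Fin 2) (Fin 2) K) = !![a, ε * b; b, a]) :
    γ ∈ Subgroup.center (GL (Fin 2) K) ↔ b = 0 := by
  rw [Matrix.GeneralLinearGroup.mem_center_iff_val_mem_range_scalar, hγ]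
  constructor
  · rintro ⟨c, hc⟩
    simpa using (congrFun (congrFun hc 1) 0).symm
  · rintro rfl
    exact ⟨a, by ext i j; fin_cases i <;> fin_cases j <;> simp⟩

theorem card_ker_comp_subtype_mul_card_map {H K : Type*} [Group H] [Group K] (f : H →* K)
    (G : Subgroup H) : Nat.card (f.comp G.subtype).ker * Nat.card (G.map f) = Nat.card G := by
  rw [← Subgroup.card_mul_index (f.comp G.subtype).ker, Subgroup.index_ker,
    MonoidHom.range_comp, Subgroup.range_subtype]

theorem card_ker_comp_subtype_div_card {H K : Type*} [Group H] [Group K] (f : H →* K)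
    (G : Subgroup H) [Finite G] :
    (Nat.card (f.comp G.subtype).ker : ℚ) / Nat.card G = 1 / Nat.card (G.map f) := by
  have hcard := card_ker_comp_subtype_mul_card_map f G
  have hG : (Nat.card G : ℚ) ≠ 0 := Nat.cast_ne_zero.mpr Nat.card_pos.ne'
  have hmap : (Nat.card (G.map f) : ℚ) ≠ 0 := by
    rw [← hcard, Nat.cast_mul] at hG
    exact right_ne_zero_of_mul hG
  rw [div_eq_div_iff hG hmap, ← hcard]
  push_cast
  ring

theorem stmt_11_general (ℓ : ℕ) [Fact (Nat.Prime ℓ)]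
    (ε : ZMod ℓ) (hεns : ¬ IsSquare ε)
    (G : Subgroup (GL (Fin 2) (ZMod ℓ)))
    (hns : ∀ γ ∈ G, ∃ a b : ZMod ℓ,
      ((γ : Matrix (Fin 2) (Fin 2) (ZMod ℓ))) = !![a, ε * b; b, a]) :
    (Nat.card {γ : G // ∃ a : ZMod ℓ,
        (Matrix.charpoly (((γ : GL (Fin 2) (ZMod ℓ)) :
          Matrix (Fin 2) (Fin 2) (ZMod ℓ)))).IsRoot a} : ℚ) / (Nat.card G : ℚ) =
      1 / (Nat.card (G.map (QuotientGroup.mk' (Subgroup.center (GL (Fin 2) (ZMod ℓ))))) : ℚ) := by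
  set π := QuotientGroup.mk' (Subgroup.center (GL (Fin 2) (ZMod ℓ)))
  have has_eigenvalue_iff_mem_ker : ∀ γ : G, (∃ a : ZMod ℓ,
      (Matrix.charpoly ((γ : GL (Fin 2) (ZMod ℓ)) : Matrix (Fin 2) (Fin 2) (ZMod ℓ))).IsRoot a) ↔
      γ ∈ (π.comp G.subtype).ker := by
    intro γ
    obtain ⟨a, b, hγ⟩ := hns γ γ.2
    rw [MonoidHom.mem_ker, MonoidHom.comp_apply, QuotientGroup.mk'_apply,
      QuotientGroup.eq_one_iff, Subgroup.coe_subtype, mem_center_iff_of_val_eq_cartan hγ, hγ,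
      exists_isRoot_charpoly_cartan_iff hεns]
  rw [Nat.card_congr (Equiv.subtypeEquivRight has_eigenvalue_iff_mem_ker)]
  exact card_ker_comp_subtype_div_card π G

theorem stmt_11 (ℓ : ℕ) [Fact (Nat.Prime ℓ)] (hodd : Odd ℓ)
    (ε : ZMod ℓ) (hε : ε ≠ 0) (hεns : ¬ IsSquare ε)
    (G : Subgroup (GL (Fin 2) (ZMod ℓ)))
    (hns : ∀ γ ∈ G, ∃ a b : ZMod ℓ,
      ((γ : Matrix (Fin 2) (Fin 2) (ZMod ℓ))) = !![a, ε * b; b, a]) :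
    (Nat.card {γ : G // ∃ a : ZMod ℓ,
        (Matrix.charpoly (((γ : GL (Fin 2) (ZMod ℓ)) :
          Matrix (Fin 2) (Fin 2) (ZMod ℓ)))).IsRoot a} : ℚ) / (Nat.card G : ℚ) =
      1 / (Nat.card (G.map (QuotientGroup.mk' (Subgroup.center (GL (Fin 2) (ZMod ℓ))))) : ℚ) :=
  stmt_11_general ℓ ε hεns G hns
end

section
/- Let ℓ be an odd prime and G ⊆ GL₂(𝔽_ℓ) a subgroup. Then the proportion of matrices in G having 1 as an eigenvalue is at most 2/|G ∩ Z| − 1/|G|, where Z is the subgroup of scalar matrices. In particular, if |G ∩ Z| ≥ 3 then this proportion is at most 2/3. -/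
/-!
Let `Z = G ∩ Z(ℓ)` and let `S ⊆ G` be the set of elements with eigenvalue `1`. Counting the pairs
`(g, z) ∈ G × Z` with `g z ∈ S` gives `|Z| |S|`. Since `z` is a scalar `u`, the matrix `u g` has
eigenvalue `1` iff `u⁻¹` is an eigenvalue of `g`, so every `g` lies in at most two such pairs, and
every `g ∈ Z` in at most one, as the identity is the only scalar matrix with eigenvalue `1`.
Hence `|Z| |S| ≤ |Z| + 2 (|G| - |Z|)`.
-/

open Matrix Polynomial

namespace Subgroup

variable {G : Type*} [Group G]

theorem card_mul_card_eq_sum_card_coset [Fintype G] (H : Subgroup G) (P : G → Prop)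
    [DecidablePred P] :
    Nat.card H * Nat.card {g // P g} = ∑ g, Nat.card {h : H // P (g * h)} := by
  classical
  have hshift (h : H) : ∑ g : G, (if P (g * h) then 1 else 0) = Fintype.card {g // P g} := by
    rw [Fintype.card_subtype, Finset.card_filter]
    exact Equiv.sum_comp (Equiv.mulRight (h : G)) (fun g => if P g then 1 else 0)
  simp only [Nat.card_eq_fintype_card, Fintype.card_subtype (α := H), Finset.card_filter]
  rw [Finset.sum_comm]
  simp [hshift]

theorem card_mul_card_add_le_of_card_coset_le [Finite G] (H : Subgroup G) (P : G → Prop)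
    {k : ℕ} (hk : ∀ g, Nat.card {h : H // P (g * h)} ≤ k) (hH : Nat.card {h : H // P h} ≤ 1) :
    Nat.card H * Nat.card {g // P g} + k * Nat.card H ≤ k * Nat.card G + Nat.card H := by
  classical
  have := Fintype.ofFinite G
  have hpoint (g : G) : Nat.card {h : H // P (g * h)} + k * (if g ∈ H then 1 else 0) ≤
      k + (if g ∈ H then 1 else 0) := by
    by_cases hg : g ∈ H
    · have hcoset : Nat.card {h : H // P (g * h)} = Nat.card {h : H // P h} :=
        Nat.card_congr <| (Equiv.mulLeft (⟨g, hg⟩ : H)).subtypeEquiv fun _ => Iff.rfl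
      simp only [hg, if_true]
      lia
    · simp only [hg, if_false]
      have := hk g
      lia
  have hcardH : ∑ g : G, (if g ∈ H then 1 else 0) = Nat.card H := by
    rw [Finset.sum_boole, Nat.cast_id, Nat.card_eq_fintype_card, ← Fintype.card_subtype]
  have := Finset.sum_le_sum fun g (_ : g ∈ Finset.univ) => hpoint g
  rw [Finset.sum_add_distrib, Finset.sum_add_distrib, ← Finset.mul_sum, hcardH, Finset.sum_const,
    Finset.card_univ, smul_eq_mul, ← card_mul_card_eq_sum_card_coset] at this
  rw [Nat.card_eq_fintype_card (α := G)]
  lia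

end Subgroup

namespace Matrix

variable {n F : Type*} [Fintype n] [DecidableEq n] [Field F]

theorem isRoot_charpoly_unit_smul_iff (M : Matrix n n F) (u : Fˣ) (a : F) :
    (u • M).charpoly.IsRoot a ↔ M.charpoly.IsRoot (u⁻¹ • a) := by
  rw [← mem_spectrum_iff_isRoot_charpoly, ← mem_spectrum_iff_isRoot_charpoly,
    spectrum.unit_smul_eq_smul, Set.mem_smul_set_iff_inv_smul_mem]

namespace GeneralLinearGroup

theorem isRoot_charpoly_mul_scalar_iff (γ : GL n F) (u : Fˣ) :
    ((γ * scalar n u : GL n F) : Matrix n n F).charpoly.IsRoot 1 ↔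
      (γ : Matrix n n F).charpoly.IsRoot (u⁻¹ : Fˣ) := by
  have : ((γ * scalar n u : GL n F) : Matrix n n F) = u • (γ : Matrix n n F) := by
    rw [Units.val_mul, coe_scalar, scalar_apply, ← smul_one_eq_diagonal, Matrix.mul_smul,
      Matrix.mul_one, Units.smul_def]
  rw [this, isRoot_charpoly_unit_smul_iff, Units.smul_def, smul_eq_mul, mul_one]

theorem eq_one_of_mem_center_of_isRoot_charpoly {z : GL n F}
    (hz : z ∈ Subgroup.center (GL n F)) (h : (z : Matrix n n F).charpoly.IsRoot 1) : z = 1 := by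
  obtain ⟨u, rfl⟩ := center_eq_range_scalar.le hz
  rw [coe_scalar, scalar_apply, charpoly_diagonal, IsRoot, eval_prod,
    Finset.prod_eq_zero_iff] at h
  obtain ⟨-, -, hu⟩ := h
  rw [eval_sub, eval_X, eval_C] at hu
  have : u = 1 := Units.ext (sub_eq_zero.mp hu).symm
  rw [this, map_one]

theorem card_isRoot_charpoly_mul_le (γ : GL n F) {Z : Subgroup (GL n F)}
    (hZ : Z ≤ Subgroup.center (GL n F)) :
    Nat.card {z : Z // ((γ * z : GL n F) : Matrix n n F).charpoly.IsRoot 1} ≤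
      Fintype.card n := by
  classical
  set U : Set Fˣ :=
    {u | scalar n u ∈ Z ∧ ((γ * scalar n u : GL n F) : Matrix n n F).charpoly.IsRoot 1}
  set roots := (γ : Matrix n n F).charpoly.roots.toFinset
  have hroots : roots.card ≤ Fintype.card n :=
    (Multiset.toFinset_card_le _).trans <| (card_roots' _).trans (charpoly_natDegree_eq_dim _).le
  let inv : U → roots := fun u => ⟨((u.1⁻¹ : Fˣ) : F), by
    rw [Multiset.mem_toFinset, mem_roots (charpoly_monic _).ne_zero]
    exact (isRoot_charpoly_mul_scalar_iff γ u).mp u.2.2⟩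
  have hinv : Function.Injective inv := fun u v huv =>
    Subtype.ext <| inv_injective <| Units.ext (congrArg Subtype.val huv :)
  have : Finite U := Finite.of_injective inv hinv
  calc _ ≤ Nat.card U :=
        Nat.card_le_card_of_surjective (fun u => ⟨⟨scalar n u, u.2.1⟩, u.2.2⟩)
          (fun ⟨⟨z, hz⟩, hγz⟩ => by
            obtain ⟨u, rfl⟩ := center_eq_range_scalar.le (hZ hz)
            exact ⟨⟨u, hz, hγz⟩, rfl⟩)
    _ ≤ Nat.card roots := Nat.card_le_card_of_injective inv hinv
    _ ≤ Fintype.card n := by rwa [Nat.card_eq_fintype_card, Fintype.card_coe]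

theorem card_inf_center_mul_card_isRoot_charpoly_one_add_le (G : Subgroup (GL n F)) [Finite G] :
    Nat.card (G ⊓ Subgroup.center (GL n F) : Subgroup _) *
        Nat.card {γ : G // ((γ : GL n F) : Matrix n n F).charpoly.IsRoot 1} +
      Fintype.card n * Nat.card (G ⊓ Subgroup.center (GL n F) : Subgroup _) ≤
    Fintype.card n * Nat.card G + Nat.card (G ⊓ Subgroup.center (GL n F) : Subgroup _) := by
  set Z := G ⊓ Subgroup.center (GL n F)
  have hZ : Nat.card (Z.subgroupOf G) = Nat.card Z :=
    Nat.card_congr (Subgroup.subgroupOfEquivOfLe inf_le_left).toEquiv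
  rw [← hZ]
  refine (Z.subgroupOf G).card_mul_card_add_le_of_card_coset_le _ (fun g => ?_) ?_
  · calc _ = Nat.card {z : Z // (((g : GL n F) * z : GL n F) : Matrix n n F).charpoly.IsRoot 1} :=
          Nat.card_congr <| (Subgroup.subgroupOfEquivOfLe inf_le_left).toEquiv.subtypeEquiv
            fun _ => Iff.rfl
      _ ≤ Fintype.card n := card_isRoot_charpoly_mul_le _ inf_le_right
  · have eq_one (x : Z.subgroupOf G)
        (hx : (((x : G) : GL n F) : Matrix n n F).charpoly.IsRoot 1) : x = 1 :=
      Subtype.ext <| Subtype.ext <|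
        eq_one_of_mem_center_of_isRoot_charpoly (Subgroup.mem_subgroupOf.mp x.2).2 hx
    refine Finite.card_le_one_iff_subsingleton.mpr ⟨fun ⟨x, hx⟩ ⟨y, hy⟩ => ?_⟩
    simp only [eq_one x hx, eq_one y hy]

end GeneralLinearGroup

end Matrix

theorem stmt_12_general (ℓ : ℕ) [Fact (Nat.Prime ℓ)]
    (G : Subgroup (GL (Fin 2) (ZMod ℓ))) :
    (Nat.card {γ : G // (Matrix.charpoly (((γ : GL (Fin 2) (ZMod ℓ)) :
        Matrix (Fin 2) (Fin 2) (ZMod ℓ)))).IsRoot 1} : ℚ) / (Nat.card G : ℚ) ≤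
      2 / (Nat.card (G ⊓ Subgroup.center (GL (Fin 2) (ZMod ℓ)) : Subgroup _) : ℚ)
        - 1 / (Nat.card G : ℚ) ∧
    (3 ≤ Nat.card (G ⊓ Subgroup.center (GL (Fin 2) (ZMod ℓ)) : Subgroup _) →
      (Nat.card {γ : G // (Matrix.charpoly (((γ : GL (Fin 2) (ZMod ℓ)) :
        Matrix (Fin 2) (Fin 2) (ZMod ℓ)))).IsRoot 1} : ℚ) / (Nat.card G : ℚ) ≤ 2 / 3) := by
  have key := GeneralLinearGroup.card_inf_center_mul_card_isRoot_charpoly_one_add_le G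
  rw [Fintype.card_fin] at key
  set s := Nat.card {γ : G // (((γ : GL (Fin 2) (ZMod ℓ)) :
    Matrix (Fin 2) (Fin 2) (ZMod ℓ))).charpoly.IsRoot 1}
  set z := Nat.card (G ⊓ Subgroup.center (GL (Fin 2) (ZMod ℓ)) : Subgroup _)
  have hz : (0 : ℚ) < z := Nat.cast_pos.mpr Nat.card_pos
  have hg : (0 : ℚ) < Nat.card G := Nat.cast_pos.mpr Nat.card_pos
  have bound : (s : ℚ) / Nat.card G ≤ 2 / z - 1 / Nat.card G := by
    rw [le_sub_iff_add_le, ← add_div, div_le_div_iff₀ hg hz]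
    exact_mod_cast (by lia : (s + 1) * z ≤ 2 * Nat.card G)
  refine ⟨bound, fun hz3 => bound.trans ?_⟩
  have : (2 : ℚ) / z ≤ 2 / 3 := by gcongr; exact_mod_cast hz3
  have : (0 : ℚ) ≤ 1 / Nat.card G := by positivity
  linarith

theorem stmt_12 (ℓ : ℕ) [Fact (Nat.Prime ℓ)] (hodd : Odd ℓ)
    (G : Subgroup (GL (Fin 2) (ZMod ℓ))) :
    (Nat.card {γ : G // (Matrix.charpoly (((γ : GL (Fin 2) (ZMod ℓ)) :
        Matrix (Fin 2) (Fin 2) (ZMod ℓ)))).IsRoot 1} : ℚ) / (Nat.card G : ℚ) ≤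
      2 / (Nat.card (G ⊓ Subgroup.center (GL (Fin 2) (ZMod ℓ)) : Subgroup _) : ℚ)
        - 1 / (Nat.card G : ℚ) ∧
    (3 ≤ Nat.card (G ⊓ Subgroup.center (GL (Fin 2) (ZMod ℓ)) : Subgroup _) →
      (Nat.card {γ : G // (Matrix.charpoly (((γ : GL (Fin 2) (ZMod ℓ)) :
        Matrix (Fin 2) (Fin 2) (ZMod ℓ)))).IsRoot 1} : ℚ) / (Nat.card G : ℚ) ≤ 2 / 3) :=
  stmt_12_general ℓ G
end

section
/- Let ℓ be an odd prime and G ⊆ GL₂(𝔽_ℓ) a subgroup with G ∩ Z = {±I}, where Z is the group of scalar matrices. Then the number of γ ∈ G with 1 as an eigenvalue is at most 2·|Ḡ₂| + |Ḡ \ Ḡ₂|, where Ḡ is the image of G in PGL₂(𝔽_ℓ) and Ḡ₂ is the set of elements of Ḡ of order 2. -/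
/-! The hypothesis `G ∩ Z = {±1}` makes `G → Ḡ` two-to-one with fibres `{γ, -γ}`. If both `γ` and
`-γ` have eigenvalue `1`, then `χ_γ(1) = χ_{-γ}(1) = 0` forces `tr γ = 0` and `det γ = -1`
(as `2 ≠ 0`), so `γ² = 1` by Cayley–Hamilton while `γ ≠ ±1`: its class has order `2`. Hence a
class of order `2` lifts to at most two elements with eigenvalue `1`, any other class to at
most one. -/

open Polynomial Finset

theorem Matrix.trace_eq_zero_and_sq_eq_one_of_isRoot_charpoly {R : Type*} [CommRing R] [IsDomain R]
    (h2 : (2 : R) ≠ 0) {M : Matrix (Fin 2) (Fin 2) R} (hM : M.charpoly.IsRoot 1)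
    (hnegM : (-M).charpoly.IsRoot 1) : M.trace = 0 ∧ M ^ 2 = 1 := by
  simp only [IsRoot, charpoly_fin_two, Matrix.trace_neg, Matrix.det_neg, eval_add, eval_sub,
    eval_pow, eval_mul, eval_X, eval_C, Fintype.card_fin] at hM hnegM
  have htrace : M.trace = 0 := by
    refine (mul_eq_zero.mp ?_).resolve_left h2
    linear_combination hnegM - hM
  refine ⟨htrace, ?_⟩
  have hdet : M.det = -1 := by linear_combination hM + htrace
  have hCH := M.aeval_self_charpoly
  simp only [charpoly_fin_two, htrace, hdet, map_add, map_pow, aeval_X,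
    map_zero, zero_mul, sub_zero, map_neg, map_one, add_neg_eq_zero] at hCH
  exact hCH

theorem Nat.card_le_two_mul_card_add_card_of_fibers {α β : Type*} [Finite α] [Finite β]
    (f : α → β) (p : β → Prop)
    (hfiber : ∀ a₁ a₂ a₃, f a₁ = f a₂ → f a₁ = f a₃ → a₁ ≠ a₂ → a₁ ≠ a₃ → a₂ = a₃)
    (hcollision : ∀ a₁ a₂, f a₁ = f a₂ → a₁ ≠ a₂ → p (f a₁)) :
    Nat.card α ≤ 2 * Nat.card {b // p b} + Nat.card {b // ¬ p b} := by
  classical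
  cases nonempty_fintype α
  cases nonempty_fintype β
  have hbound (b : β) : #{a | f a = b} ≤ if p b then 2 else 1 := by
    split_ifs with hb
    · by_contra! h
      obtain ⟨a₁, h₁, a₂, h₂, a₃, h₃, h₁₂, h₁₃, h₂₃⟩ := two_lt_card.mp h
      simp only [mem_filter, mem_univ, true_and] at h₁ h₂ h₃
      exact h₂₃ (hfiber a₁ a₂ a₃ (h₁.trans h₂.symm) (h₁.trans h₃.symm) h₁₂ h₁₃)
    · refine card_le_one.mpr fun a₁ h₁ a₂ h₂ => ?_
      simp only [mem_filter, mem_univ, true_and] at h₁ h₂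
      by_contra hne
      exact hb (h₁ ▸ hcollision a₁ a₂ (h₁.trans h₂.symm) hne)
  simp only [Nat.card_eq_fintype_card, Fintype.card_subtype]
  calc Fintype.card α = ∑ b, #{a | f a = b} := card_eq_sum_card_fiberwise (by simp)
    _ ≤ ∑ b, if p b then 2 else 1 := sum_le_sum fun b _ => hbound b
    _ = 2 * #{b | p b} + #{b | ¬ p b} := by
      rw [sum_ite, sum_const, sum_const, smul_eq_mul, smul_eq_mul, mul_one, mul_comm]

section SignedCenter

variable {H : Type*} [Group H] [HasDistribNeg H] {G : Subgroup H}

theorem eq_neg_of_subgroupMap_mk'_center_eq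
    (hZ : ((G ⊓ Subgroup.center H : Subgroup H) : Set H) = {1, -1}) {γ₁ γ₂ : G}
    (h : (QuotientGroup.mk' (Subgroup.center H)).subgroupMap G γ₁ =
      (QuotientGroup.mk' (Subgroup.center H)).subgroupMap G γ₂)
    (hne : γ₁ ≠ γ₂) : (γ₂ : H) = -γ₁ := by
  obtain ⟨z, hz, hγ₂⟩ := (QuotientGroup.mk'_eq_mk' _).mp (congrArg Subtype.val h)
  have hzG : z ∈ G := by simpa [← hγ₂] using mul_mem (inv_mem γ₁.2) γ₂.2
  have hzZ : z ∈ ((G ⊓ Subgroup.center H : Subgroup H) : Set H) := ⟨hzG, hz⟩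
  rw [hZ] at hzZ
  rcases hzZ with rfl | rfl
  · exact absurd (Subtype.ext (by simpa using hγ₂)) hne
  · simpa using hγ₂.symm

theorem orderOf_subgroupMap_mk'_center_eq_two
    (hZ : ((G ⊓ Subgroup.center H : Subgroup H) : Set H) = {1, -1}) {γ : G}
    (hsq : γ ^ 2 = 1) (hone : (γ : H) ≠ 1) (hneg : (γ : H) ≠ -1) :
    orderOf ((QuotientGroup.mk' (Subgroup.center H)).subgroupMap G γ) = 2 := by
  refine orderOf_eq_prime (by rw [← map_pow, hsq, map_one]) fun h => ?_
  have hγ : (γ : H) ∈ ((G ⊓ Subgroup.center H : Subgroup H) : Set H) := by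
    refine ⟨γ.2, ?_⟩
    rw [← QuotientGroup.ker_mk' (Subgroup.center H)]
    exact congrArg Subtype.val h
  rw [hZ] at hγ
  exact hγ.elim hone hneg

end SignedCenter

theorem stmt_13 (ℓ : ℕ) [Fact (Nat.Prime ℓ)] (hodd : Odd ℓ)
    (G : Subgroup (GL (Fin 2) (ZMod ℓ)))
    (hZ : ((G ⊓ Subgroup.center (GL (Fin 2) (ZMod ℓ)) : Subgroup _) :
      Set (GL (Fin 2) (ZMod ℓ))) = {1, -1}) :
    (Nat.card {γ : G // (Matrix.charpoly (((γ : GL (Fin 2) (ZMod ℓ)) :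
        Matrix (Fin 2) (Fin 2) (ZMod ℓ)))).IsRoot 1}) ≤
      2 * Nat.card {x : G.map (QuotientGroup.mk' (Subgroup.center (GL (Fin 2) (ZMod ℓ)))) //
          orderOf x = 2} +
        Nat.card {x : G.map (QuotientGroup.mk' (Subgroup.center (GL (Fin 2) (ZMod ℓ)))) //
          orderOf x ≠ 2} := by
  have h2 : (2 : ZMod ℓ) ≠ 0 :=
    Ring.two_ne_zero (by rw [ZMod.ringChar_zmod_n]; exact hodd.ne_two_of_dvd_nat dvd_rfl)
  set f := (QuotientGroup.mk' (Subgroup.center (GL (Fin 2) (ZMod ℓ)))).subgroupMap G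
  refine Nat.card_le_two_mul_card_add_card_of_fibers (fun γ => f γ.1) (orderOf · = 2) ?_ ?_
  · intro γ₁ γ₂ γ₃ h₁₂ h₁₃ hne₁₂ hne₁₃
    have e₂ := eq_neg_of_subgroupMap_mk'_center_eq hZ h₁₂ (Subtype.val_injective.ne hne₁₂)
    have e₃ := eq_neg_of_subgroupMap_mk'_center_eq hZ h₁₃ (Subtype.val_injective.ne hne₁₃)
    exact Subtype.ext (Subtype.ext (e₂.trans e₃.symm))
  · rintro ⟨γ₁, hγ₁⟩ ⟨γ₂, hγ₂⟩ h hne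
    have e := eq_neg_of_subgroupMap_mk'_center_eq hZ h (Subtype.val_injective.ne hne)
    rw [e, Units.val_neg] at hγ₂
    obtain ⟨htr, hsq⟩ := Matrix.trace_eq_zero_and_sq_eq_one_of_isRoot_charpoly h2 hγ₁ hγ₂
    have hne_one : (γ₁ : GL (Fin 2) (ZMod ℓ)) ≠ 1 := by
      intro h1; simp [h1, Matrix.trace_one, h2] at htr
    have hne_neg_one : (γ₁ : GL (Fin 2) (ZMod ℓ)) ≠ -1 := by
      intro h1; simp [h1, Matrix.trace_one, h2] at htr
    exact orderOf_subgroupMap_mk'_center_eq_two hZ (Subtype.ext (Units.ext hsq)) hne_one hne_neg_one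
end

section
/- Let ℓ be an odd prime and G a subgroup of the group of invertible diagonal matrices (split Cartan) in GL₂(𝔽_ℓ). If the proportion F₁(G) of matrices in G with 1 as an eigenvalue is not 1, then F₁(G) ≤ 1/2 + 1/|G|. -/
/-!
On a group of diagonal matrices the two diagonal entries are characters `χ₀, χ₁` whose kernels
`A, B` meet trivially, and `γ` has eigenvalue `1` exactly when `γ ∈ A ∪ B`. If `F₁(G) ≠ 1`, both
kernels are proper subgroups, so `|A|, |B| ≤ |G| / 2`, while `|A| |B| ≤ |G|` because `A ∩ B = 1`.
These bounds give `|A ∪ B| = |A| + |B| - 1 ≤ |G| / 2 + 1`.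
-/

namespace Subgroup

variable {G : Type*} [Group G] {A B : Subgroup G}

theorem two_mul_card_le_of_ne_top [Finite G] (h : A ≠ ⊤) : 2 * Nat.card A ≤ Nat.card G := by
  rw [← A.card_mul_index, mul_comm]
  exact Nat.mul_le_mul_left _ (A.one_lt_index_of_ne_top h)

theorem card_mul_card_le_of_disjoint [Finite G] (h : Disjoint A B) :
    Nat.card A * Nat.card B ≤ Nat.card G := by
  have hrel : B.relIndex A = Nat.card A := by
    rw [← inf_relIndex_left, disjoint_iff.mp h, relIndex_bot_left]
  have hle : B.relIndex A ≤ B.index := by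
    simpa only [relIndex_top_right] using
      relIndex_le_of_le_right le_top (B.relIndex_top_right ▸ B.index_ne_zero_of_finite)
  rw [← B.card_mul_index, mul_comm (Nat.card B), ← hrel]
  exact Nat.mul_le_mul_right _ hle

theorem ncard_union_add_one_of_disjoint [Finite G] (h : Disjoint A B) :
    ((A : Set G) ∪ B).ncard + 1 = Nat.card A + Nat.card B := by
  have hinter : (A : Set G) ∩ B = {1} := by
    rw [← coe_inf, disjoint_iff.mp h, coe_bot]
  rw [← Set.ncard_singleton (1 : G), ← hinter, Set.ncard_union_add_ncard_inter]
  rfl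

theorem two_mul_ncard_union_le [Finite G] (h : Disjoint A B) (hA : A ≠ ⊤) (hB : B ≠ ⊤) :
    2 * ((A : Set G) ∪ B).ncard ≤ Nat.card G + 2 := by
  have hunion := ncard_union_add_one_of_disjoint h
  have hprod := card_mul_card_le_of_disjoint h
  have ha := two_mul_card_le_of_ne_top hA
  have hb := two_mul_card_le_of_ne_top hB
  have ha0 : 1 ≤ Nat.card A := Nat.card_pos
  have hb0 : 1 ≤ Nat.card B := Nat.card_pos
  -- if `|A|, |B| ≥ 2` then `2|A| + 2|B| ≤ |A||B| + 4`; if one of them is `1`, halve the other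
  nlinarith

end Subgroup

namespace Matrix

variable {n R : Type*}

theorem IsDiag.mul_apply_self [Fintype n] [NonUnitalNonAssocSemiring R] {A : Matrix n n R}
    (hA : A.IsDiag) (B : Matrix n n R) (i : n) : (A * B) i i = A i i * B i i := by
  rw [mul_apply, Finset.sum_eq_single i (fun j _ hj => by rw [hA hj.symm, zero_mul])
    (fun h => absurd (Finset.mem_univ i) h)]

theorem IsDiag.eq_one_of_forall_apply_self_eq_one [DecidableEq n] [Zero R] [One R]
    {A : Matrix n n R} (hA : A.IsDiag) (h : ∀ i, A i i = 1) : A = 1 := by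
  rw [← hA.diagonal_diag, ← diagonal_one]
  exact congrArg diagonal (funext h)

theorem IsDiag.isRoot_charpoly_iff [Fintype n] [DecidableEq n] [CommRing R] [IsDomain R]
    {A : Matrix n n R} (hA : A.IsDiag) (c : R) : A.charpoly.IsRoot c ↔ ∃ i, A i i = c := by
  rw [← hA.diagonal_diag, charpoly_diagonal]
  simp only [diag_apply, Polynomial.IsRoot.def, Polynomial.eval_prod, Polynomial.eval_sub,
    Polynomial.eval_X, Polynomial.eval_C, Finset.prod_eq_zero_iff, Finset.mem_univ, sub_eq_zero,
    true_and, diagonal_apply_eq]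
  exact exists_congr fun _ => eq_comm

end Matrix

section DiagonalSubgroup

open Matrix

variable {n R : Type*} [Fintype n] [DecidableEq n] [CommRing R] {G : Subgroup (GL n R)}
  (hG : ∀ γ ∈ G, ((γ : GL n R) : Matrix n n R).IsDiag)

def diagEntryHom (i : n) : G →* R where
  toFun γ := ((γ : GL n R) : Matrix n n R) i i
  map_one' := by simp
  map_mul' γ δ := (hG γ γ.2).mul_apply_self _ i

theorem eq_one_of_forall_diagEntryHom_eq_one {γ : G} (h : ∀ i, diagEntryHom hG i γ = 1) :
    γ = 1 :=
  Subtype.ext (Units.ext ((hG γ γ.2).eq_one_of_forall_apply_self_eq_one h))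

theorem isRoot_charpoly_one_iff_exists_mem_ker [IsDomain R] (γ : G) :
    ((γ : GL n R) : Matrix n n R).charpoly.IsRoot 1 ↔ ∃ i, γ ∈ (diagEntryHom hG i).ker :=
  (hG γ γ.2).isRoot_charpoly_iff 1

end DiagonalSubgroup

theorem disjoint_ker_diagEntryHom_zero_one {R : Type*} [CommRing R] {G : Subgroup (GL (Fin 2) R)}
    (hG : ∀ γ ∈ G, ((γ : GL (Fin 2) R) : Matrix (Fin 2) (Fin 2) R).IsDiag) :
    Disjoint (diagEntryHom hG 0).ker (diagEntryHom hG 1).ker := by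
  rw [Subgroup.disjoint_def]
  exact fun h0 h1 => eq_one_of_forall_diagEntryHom_eq_one hG (Fin.forall_fin_two.mpr ⟨h0, h1⟩)

theorem stmt_16_general (ℓ : ℕ) [Fact (Nat.Prime ℓ)]
    (G : Subgroup (GL (Fin 2) (ZMod ℓ)))
    (hCs : ∀ γ ∈ G, Matrix.IsDiag ((γ : Matrix (Fin 2) (Fin 2) (ZMod ℓ))))
    (hne : (Nat.card {γ : G // (Matrix.charpoly (((γ : GL (Fin 2) (ZMod ℓ)) :
        Matrix (Fin 2) (Fin 2) (ZMod ℓ)))).IsRoot 1} : ℚ) / (Nat.card G : ℚ) ≠ 1) :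
    (Nat.card {γ : G // (Matrix.charpoly (((γ : GL (Fin 2) (ZMod ℓ)) :
        Matrix (Fin 2) (Fin 2) (ZMod ℓ)))).IsRoot 1} : ℚ) / (Nat.card G : ℚ) ≤
      1 / 2 + 1 / (Nat.card G : ℚ) := by
  set χ := diagEntryHom hCs
  have hS : {γ : G | ((γ : GL (Fin 2) (ZMod ℓ)) :
      Matrix (Fin 2) (Fin 2) (ZMod ℓ)).charpoly.IsRoot 1} = ((χ 0).ker : Set G) ∪ (χ 1).ker := by
    ext γ
    exact (isRoot_charpoly_one_iff_exists_mem_ker hCs γ).trans Fin.exists_fin_two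
  rw [← Set.coe_ofPred, Nat.card_coe_set_eq, hS] at hne ⊢
  have hn : (0 : ℚ) < Nat.card G := by exact_mod_cast Nat.card_pos
  have hproper : ∀ i, (χ i).ker ≠ ⊤ := by
    intro i hi
    have huniv : ((χ 0).ker ∪ (χ 1).ker : Set G) = Set.univ :=
      hS ▸ Set.eq_univ_of_forall fun γ =>
        (isRoot_charpoly_one_iff_exists_mem_ker hCs γ).2 ⟨i, hi ▸ Subgroup.mem_top γ⟩
    rw [huniv, Set.ncard_univ, div_self hn.ne'] at hne
    exact hne rfl
  have hcount : (2 * ((χ 0).ker ∪ (χ 1).ker : Set G).ncard : ℚ) ≤ Nat.card G + 2 := by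
    exact_mod_cast Subgroup.two_mul_ncard_union_le (disjoint_ker_diagEntryHom_zero_one hCs)
      (hproper 0) (hproper 1)
  rw [div_le_iff₀ hn, add_mul, one_div_mul_cancel hn.ne']
  linarith

theorem stmt_16 (ℓ : ℕ) [Fact (Nat.Prime ℓ)] (hodd : Odd ℓ)
    (G : Subgroup (GL (Fin 2) (ZMod ℓ)))
    (hCs : ∀ γ ∈ G, Matrix.IsDiag ((γ : Matrix (Fin 2) (Fin 2) (ZMod ℓ))))
    (hne : (Nat.card {γ : G // (Matrix.charpoly (((γ : GL (Fin 2) (ZMod ℓ)) :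
        Matrix (Fin 2) (Fin 2) (ZMod ℓ)))).IsRoot 1} : ℚ) / (Nat.card G : ℚ) ≠ 1) :
    (Nat.card {γ : G // (Matrix.charpoly (((γ : GL (Fin 2) (ZMod ℓ)) :
        Matrix (Fin 2) (Fin 2) (ZMod ℓ)))).IsRoot 1} : ℚ) / (Nat.card G : ℚ) ≤
      1 / 2 + 1 / (Nat.card G : ℚ) :=
  stmt_16_general ℓ G hCs hne
end

section
/- Let ℓ be an odd prime and G a subgroup of GL₂(𝔽_ℓ) contained in the normalizer of the split Cartan subgroup. If the proportion F₁(G) of matrices in G with 1 as an eigenvalue is not 1, then F₁(G) ≤ 1/2 + 1/|G|. -/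
/-!
Let `A` and `B` be the stabilisers in `G` of the two standard basis vectors. A diagonal matrix
has eigenvalue `1` iff it lies in `A ∪ B`, and an antidiagonal one iff its determinant is `-1`;
if `c` elements of `G` are of the latter kind, at most `|A| + |B| - 1 + c` elements of `G` have
eigenvalue `1`. Since `A ∩ B = 1`, `|A| |B|` is at most the order of the diagonal part `H`
of `G`.

If `G = H`, then `c = 0`, and `A`, `B` are proper subgroups because `F₁(G) ≠ 1`; so
`|A|, |B| ≤ |G| / 2`, which with `|A| |B| ≤ |G|` gives `|A| + |B| ≤ |G| / 2 + 2`. Otherwise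
`H` has index `2` and an antidiagonal element conjugates `A` onto `B`. Multiplying the antidiagonal
elements of determinant `-1` by one of them lands in the group `D` of diagonal elements of
determinant `1`, and `A ∩ D = 1`. So with `a = |A|` we get `a² ≤ |H|`, `a c ≤ |H|` and
`c ≤ |H|`, hence `2 a + c ≤ |H| + 2`.
-/

open Matrix Polynomial

section FiniteGroup

variable {Γ : Type*} [Group Γ] [Finite Γ]

theorem Subgroup.two_mul_card_le_of_lt {A B : Subgroup Γ} (h : A < B) :
    2 * Nat.card A ≤ Nat.card B := by
  obtain ⟨k, hk⟩ := Subgroup.card_dvd_of_le h.le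
  have hk2 : 2 ≤ k := by
    by_contra! hk2
    interval_cases k
    · exact Nat.card_pos.ne' hk
    · exact h.ne (Subgroup.eq_of_le_of_card_ge h.le (by rw [hk, mul_one]))
  rw [hk, mul_comm]
  exact Nat.mul_le_mul_left _ hk2

theorem Subgroup.card_mul_card_le_of_disjoint_s17 {A B H : Subgroup Γ} (hA : A ≤ H) (hB : B ≤ H)
    (hAB : Disjoint A B) : Nat.card A * Nat.card B ≤ Nat.card H := by
  rw [← Nat.card_prod]
  refine Nat.card_le_card_of_injective
    (fun p => ⟨p.1 * p.2, H.mul_mem (hA p.1.2) (hB p.2.2)⟩) fun p q hpq => ?_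
  exact Subgroup.mul_injective_of_disjoint hAB (congrArg Subtype.val hpq)

end FiniteGroup

namespace Matrix

section FinTwo

variable {R K : Type*} [CommRing R] [Field K]

def IsDiagOrAntidiag (M : Matrix (Fin 2) (Fin 2) R) : Prop :=
  M.IsDiag ∨ (M 0 0 = 0 ∧ M 1 1 = 0)

theorem isRoot_charpoly_one_iff [Nontrivial R] (M : Matrix (Fin 2) (Fin 2) R) :
    M.charpoly.IsRoot 1 ↔ 1 - M.trace + M.det = 0 := by
  simp [charpoly_fin_two, IsRoot]

theorem IsDiag.isRoot_charpoly_one_iff {M : Matrix (Fin 2) (Fin 2) K} (hM : M.IsDiag) :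
    M.charpoly.IsRoot 1 ↔ M 0 0 = 1 ∨ M 1 1 = 1 := by
  have hfactor : 1 - M.trace + M.det = (1 - M 0 0) * (1 - M 1 1) := by
    rw [trace_fin_two, det_fin_two, hM (by decide : (0 : Fin 2) ≠ 1)]
    ring
  rw [Matrix.isRoot_charpoly_one_iff, hfactor, mul_eq_zero, sub_eq_zero, sub_eq_zero, eq_comm,
    @eq_comm _ 1 (M 1 1)]

theorem isRoot_charpoly_one_iff_of_antidiag {M : Matrix (Fin 2) (Fin 2) K}
    (h00 : M 0 0 = 0) (h11 : M 1 1 = 0) : M.charpoly.IsRoot 1 ↔ M.det = -1 := by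
  rw [isRoot_charpoly_one_iff, trace_fin_two, h00, h11]
  constructor <;> intro h <;> linear_combination h

theorem isDiag_mul_of_antidiag {M N : Matrix (Fin 2) (Fin 2) R} (hM00 : M 0 0 = 0)
    (hM11 : M 1 1 = 0) (hN00 : N 0 0 = 0) (hN11 : N 1 1 = 0) : (M * N).IsDiag := by
  intro i j hij
  fin_cases i <;> fin_cases j <;> simp_all [mul_apply, Fin.sum_univ_two]

theorem mulVec_single_one_of_antidiag {M : Matrix (Fin 2) (Fin 2) R} {i : Fin 2}
    (h : M i i = 0) : M *ᵥ Pi.single i 1 = M i.rev i • Pi.single i.rev 1 := by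
  ext k
  fin_cases i <;> fin_cases k <;> simp_all

end FinTwo

namespace GeneralLinearGroup

section Stabilizer

variable {n R : Type*} [Fintype n] [DecidableEq n] [CommRing R]

def vecStabilizer (v : n → R) : Subgroup (GL n R) where
  carrier := {γ | (γ : Matrix n n R) *ᵥ v = v}
  mul_mem' {γ δ} hγ hδ := by
    simp only [Set.mem_ofPred_eq, Units.val_mul, ← mulVec_mulVec] at *
    rw [hδ, hγ]
  one_mem' := one_mulVec v
  inv_mem' {γ} hγ := by
    simp only [Set.mem_ofPred_eq] at *
    conv_lhs => rw [← hγ]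
    rw [mulVec_mulVec, ← Units.val_mul, inv_mul_cancel, Units.val_one, one_mulVec]

theorem mem_vecStabilizer {v : n → R} {γ : GL n R} :
    γ ∈ vecStabilizer v ↔ (γ : Matrix n n R) *ᵥ v = v := Iff.rfl

theorem conj_mem_vecStabilizer {v : n → R} {x : GL n R} (hx : x ∈ vecStabilizer v)
    (w : GL n R) : w * x * w⁻¹ ∈ vecStabilizer ((w : Matrix n n R) *ᵥ v) := by
  rw [mem_vecStabilizer] at *
  rw [Units.val_mul, Units.val_mul, mulVec_mulVec, Matrix.mul_assoc, Matrix.mul_assoc,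
    ← Units.val_mul w⁻¹, inv_mul_cancel, Units.val_one, Matrix.mul_one, ← mulVec_mulVec, hx]

theorem vecStabilizer_smul {K : Type*} [Field K] {c : K} (hc : c ≠ 0) (v : n → K) :
    vecStabilizer (c • v) = vecStabilizer v := by
  ext γ
  rw [mem_vecStabilizer, mem_vecStabilizer, mulVec_smul, smul_right_inj hc]

theorem mem_vecStabilizer_single_iff {M : GL n R} (hM : (M : Matrix n n R).IsDiag) (i : n) :
    M ∈ vecStabilizer (Pi.single i 1) ↔ M i i = 1 := by
  rw [mem_vecStabilizer]
  conv_lhs => rw [← hM.diagonal_diag, diagonal_mulVec_single, mul_one, Pi.single_inj]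
  rfl

variable (n R) in
def diagonalSubgroup : Subgroup (GL n R) where
  carrier := {γ | (γ : Matrix n n R).IsDiag}
  mul_mem' {γ δ} hγ hδ := by
    simp only [Set.mem_ofPred_eq, Units.val_mul] at *
    rw [← hγ.diagonal_diag, ← hδ.diagonal_diag, diagonal_mul_diagonal]
    exact isDiag_diagonal _
  one_mem' := isDiag_one
  inv_mem' {γ} hγ := by
    simp only [Set.mem_ofPred_eq, coe_units_inv] at *
    rw [← hγ.diagonal_diag, inv_diagonal]
    exact isDiag_diagonal _

end Stabilizer

section FinTwo

variable {R K : Type*} [CommRing R] [Field K]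

theorem apply_rev_ne_zero [Nontrivial R] {γ : GL (Fin 2) R} {i : Fin 2} (h : γ i i = 0) :
    γ i.rev i ≠ 0 := by
  intro h'
  have hdet := isUnits_det_units γ
  rw [det_fin_two] at hdet
  fin_cases i <;> simp_all

theorem conj_mem_vecStabilizer_single_rev {w x : GL (Fin 2) K} {i : Fin 2} (hw : w i i = 0)
    (hx : x ∈ vecStabilizer (Pi.single i 1)) :
    w * x * w⁻¹ ∈ vecStabilizer (Pi.single i.rev 1) := by
  have h := conj_mem_vecStabilizer hx w
  rwa [mulVec_single_one_of_antidiag hw, vecStabilizer_smul (apply_rev_ne_zero hw)] at h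

theorem disjoint_vecStabilizer_single :
    Disjoint (vecStabilizer (Pi.single (0 : Fin 2) (1 : R))) (vecStabilizer (Pi.single 1 1)) := by
  rw [Subgroup.disjoint_def]
  intro γ h0 h1
  rw [mem_vecStabilizer, mulVec_single_one] at h0 h1
  ext i j
  fin_cases i <;> fin_cases j
  · simpa using congrFun h0 0
  · simpa using congrFun h1 0
  · simpa using congrFun h0 1
  · simpa using congrFun h1 1

theorem disjoint_vecStabilizer_single_diagonalSubgroup_inf_ker_det :
    Disjoint (vecStabilizer (Pi.single (0 : Fin 2) (1 : K)))
      (diagonalSubgroup (Fin 2) K ⊓ (det : GL (Fin 2) K →* Kˣ).ker) := by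
  rw [Subgroup.disjoint_def]
  intro γ h0 hγ
  obtain ⟨hdiag, hdet⟩ := Subgroup.mem_inf.mp hγ
  have h00 : γ 0 0 = 1 := (mem_vecStabilizer_single_iff hdiag 0).mp h0
  have h11 : γ 1 1 = 1 := by
    rw [MonoidHom.mem_ker, Units.ext_iff, val_det_apply, det_fin_two,
      hdiag (by decide : (0 : Fin 2) ≠ 1), h00] at hdet
    simpa using hdet
  ext i j
  fin_cases i <;> fin_cases j <;> simp [h00, h11, hdiag (by decide : (0 : Fin 2) ≠ 1),
    hdiag (by decide : (1 : Fin 2) ≠ 0)]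

end FinTwo

end GeneralLinearGroup

end Matrix

section SplitCartanNormalizer

open Matrix.GeneralLinearGroup

variable {K : Type*} [Field K] {G : Subgroup (GL (Fin 2) K)}

def eigenvalueOneSet (G : Subgroup (GL (Fin 2) K)) : Set (GL (Fin 2) K) :=
  {γ | γ ∈ G ∧ (γ : Matrix (Fin 2) (Fin 2) K).charpoly.IsRoot 1}

theorem card_subtype_isRoot_charpoly_one :
    Nat.card {γ : G // ((γ : GL (Fin 2) K) : Matrix (Fin 2) (Fin 2) K).charpoly.IsRoot 1} =
      (eigenvalueOneSet G).ncard :=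
  (Nat.card_congr (Equiv.subtypeSubtypeEquivSubtypeInter (· ∈ G)
    fun γ => (γ : Matrix (Fin 2) (Fin 2) K).charpoly.IsRoot 1)).trans
      (Nat.card_coe_set_eq (eigenvalueOneSet G))

theorem ncard_eigenvalueOneSet_add_one_le [Finite K] (G : Subgroup (GL (Fin 2) K)) :
    (eigenvalueOneSet G).ncard + 1 ≤
      Nat.card ↥(vecStabilizer (Pi.single 0 1) ⊓ G) +
        Nat.card ↥(vecStabilizer (Pi.single 1 1) ⊓ G) +
          (eigenvalueOneSet G \ diagonalSubgroup (Fin 2) K).ncard := by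
  set A : Set (GL (Fin 2) K) := ↑(vecStabilizer (Pi.single 0 1) ⊓ G)
  set B : Set (GL (Fin 2) K) := ↑(vecStabilizer (Pi.single 1 1) ⊓ G)
  set C := eigenvalueOneSet G \ diagonalSubgroup (Fin 2) K
  have hcover : eigenvalueOneSet G ⊆ A ∪ B ∪ C := by
    rintro γ ⟨hγG, hγ⟩
    by_cases hdiag : γ ∈ diagonalSubgroup (Fin 2) K
    · rcases (IsDiag.isRoot_charpoly_one_iff hdiag).mp hγ with h | h
      · exact Or.inl (Or.inl ⟨(mem_vecStabilizer_single_iff hdiag 0).mpr h, hγG⟩)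
      · exact Or.inl (Or.inr ⟨(mem_vecStabilizer_single_iff hdiag 1).mpr h, hγG⟩)
    · exact Or.inr ⟨⟨hγG, hγ⟩, hdiag⟩
  have hone : 1 ≤ (A ∩ B).ncard :=
    (Set.ncard_pos).mpr ⟨1, Subgroup.one_mem _, Subgroup.one_mem _⟩
  calc (eigenvalueOneSet G).ncard + 1
      ≤ (A ∪ B ∪ C).ncard + (A ∩ B).ncard := add_le_add (Set.ncard_le_ncard hcover) hone
    _ ≤ (A ∪ B).ncard + C.ncard + (A ∩ B).ncard := by
        gcongr
        exact Set.ncard_union_le _ _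
    _ = A.ncard + B.ncard + C.ncard := by rw [add_right_comm, Set.ncard_union_add_ncard_inter]
    _ = _ := by simp only [A, B, ← Nat.card_coe_set_eq]; rfl

theorem vecStabilizer_single_inf_lt_of_le_diagonalSubgroup
    (hGd : G ≤ diagonalSubgroup (Fin 2) K)
    (hS : ∃ γ ∈ G, ¬ (γ : Matrix (Fin 2) (Fin 2) K).charpoly.IsRoot 1) (i : Fin 2) :
    vecStabilizer (Pi.single i 1) ⊓ G < G := by
  refine lt_of_le_of_ne inf_le_right fun hfix => ?_
  obtain ⟨γ, hγG, hγ⟩ := hS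
  have hγi : γ i i = 1 :=
    (mem_vecStabilizer_single_iff (hGd hγG) i).mp (inf_eq_right.mp hfix hγG)
  apply hγ
  rw [IsDiag.isRoot_charpoly_one_iff (hGd hγG)]
  fin_cases i
  exacts [Or.inl hγi, Or.inr hγi]

theorem two_mul_ncard_eigenvalueOneSet_le_of_le_diagonalSubgroup [Finite K]
    (hGd : G ≤ diagonalSubgroup (Fin 2) K)
    (hS : ∃ γ ∈ G, ¬ (γ : Matrix (Fin 2) (Fin 2) K).charpoly.IsRoot 1) :
    2 * (eigenvalueOneSet G).ncard ≤ Nat.card G + 2 := by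
  have hC : (eigenvalueOneSet G \ diagonalSubgroup (Fin 2) K).ncard = 0 := by
    rw [Set.ncard_eq_zero, Set.sdiff_eq_empty]
    exact fun γ hγ => hGd hγ.1
  have hcount := ncard_eigenvalueOneSet_add_one_le G
  have hA := Subgroup.two_mul_card_le_of_lt
    (vecStabilizer_single_inf_lt_of_le_diagonalSubgroup hGd hS 0)
  have hB := Subgroup.two_mul_card_le_of_lt
    (vecStabilizer_single_inf_lt_of_le_diagonalSubgroup hGd hS 1)
  have hAB := Subgroup.card_mul_card_le_of_disjoint_s17 inf_le_right inf_le_right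
    (disjoint_vecStabilizer_single.mono (inf_le_left (b := G)) (inf_le_left (b := G)))
  set a := Nat.card ↥(vecStabilizer (Pi.single (0 : Fin 2) (1 : K)) ⊓ G)
  set b := Nat.card ↥(vecStabilizer (Pi.single (1 : Fin 2) (1 : K)) ⊓ G)
  have ha1 : 1 ≤ a := Nat.card_pos
  have hb1 : 1 ≤ b := Nat.card_pos
  obtain ha2 | ha2 := Nat.lt_or_ge a 2
  · omega
  obtain hb2 | hb2 := Nat.lt_or_ge b 2
  · omega
  nlinarith

theorem card_vecStabilizer_single_inf_le_rev [Finite K] {w : GL (Fin 2) K} (hwG : w ∈ G)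
    {i : Fin 2} (hw : w i i = 0) :
    Nat.card ↥(vecStabilizer (Pi.single i 1) ⊓ G) ≤
      Nat.card ↥(vecStabilizer (Pi.single i.rev 1) ⊓ G) := by
  refine Nat.card_le_card_of_injective (fun x => ⟨w * x * w⁻¹, ?_, ?_⟩) fun x y hxy => ?_
  · exact conj_mem_vecStabilizer_single_rev hw x.2.1
  · exact G.mul_mem (G.mul_mem hwG x.2.2) (G.inv_mem hwG)
  · exact Subtype.ext (mul_left_cancel (mul_right_cancel (congrArg Subtype.val hxy)))

theorem vecStabilizer_single_inf_le
    (hG : ∀ γ ∈ G, IsDiagOrAntidiag (γ : Matrix (Fin 2) (Fin 2) K)) (i : Fin 2) :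
    vecStabilizer (Pi.single i 1) ⊓ G ≤ diagonalSubgroup (Fin 2) K ⊓ G := by
  intro γ hγ
  obtain ⟨hfix, hγG⟩ := Subgroup.mem_inf.mp hγ
  refine ⟨Or.resolve_right (hG γ hγG) fun ⟨h00, h11⟩ => ?_, hγG⟩
  have hγi := congrFun hfix i
  rw [mulVec_single_one] at hγi
  fin_cases i <;> simp_all

theorem ncard_eigenvalueOneSet_diff_le [Finite K]
    (hG : ∀ γ ∈ G, IsDiagOrAntidiag (γ : Matrix (Fin 2) (Fin 2) K)) :
    (eigenvalueOneSet G \ diagonalSubgroup (Fin 2) K).ncard ≤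
      Nat.card ↥(diagonalSubgroup (Fin 2) K ⊓ (det : GL (Fin 2) K →* Kˣ).ker ⊓ G) := by
  have hanti : ∀ γ ∈ eigenvalueOneSet G \ diagonalSubgroup (Fin 2) K,
      γ 0 0 = 0 ∧ γ 1 1 = 0 ∧ (γ : Matrix (Fin 2) (Fin 2) K).det = -1 := by
    rintro γ ⟨⟨hγG, hγ⟩, hγd⟩
    obtain ⟨h00, h11⟩ := Or.resolve_left (hG γ hγG) hγd
    exact ⟨h00, h11, (isRoot_charpoly_one_iff_of_antidiag h00 h11).mp hγ⟩
  rcases (eigenvalueOneSet G \ diagonalSubgroup (Fin 2) K).eq_empty_or_nonempty with h | ⟨c, hc⟩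
  · simp [h]
  rw [← Nat.card_coe_set_eq]
  refine Set.ncard_le_ncard_of_injOn (c * ·) (fun γ hγ => ?_) (mul_right_injective c).injOn
  obtain ⟨hc00, hc11, hcdet⟩ := hanti c hc
  obtain ⟨hγ00, hγ11, hγdet⟩ := hanti γ hγ
  refine ⟨⟨isDiag_mul_of_antidiag hc00 hc11 hγ00 hγ11, MonoidHom.mem_ker.mpr ?_⟩,
    G.mul_mem hc.1.1 hγ.1.1⟩
  rw [Units.ext_iff, val_det_apply, Units.val_mul, det_mul, hcdet, hγdet]
  norm_num

theorem two_mul_ncard_eigenvalueOneSet_le_of_not_le_diagonalSubgroup [Finite K]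
    (hG : ∀ γ ∈ G, IsDiagOrAntidiag (γ : Matrix (Fin 2) (Fin 2) K))
    (hGd : ¬ G ≤ diagonalSubgroup (Fin 2) K) :
    2 * (eigenvalueOneSet G).ncard ≤ Nat.card G + 2 := by
  obtain ⟨w, hwG, hwd⟩ := SetLike.not_le_iff_exists.mp hGd
  obtain ⟨hw00, hw11⟩ := Or.resolve_left (hG w hwG) hwd
  have hAB : Nat.card ↥(vecStabilizer (Pi.single (0 : Fin 2) (1 : K)) ⊓ G) =
      Nat.card ↥(vecStabilizer (Pi.single (1 : Fin 2) (1 : K)) ⊓ G) :=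
    le_antisymm (card_vecStabilizer_single_inf_le_rev hwG (i := 0) hw00)
      (card_vecStabilizer_single_inf_le_rev hwG (i := 1) hw11)
  have hH : 2 * Nat.card ↥(diagonalSubgroup (Fin 2) K ⊓ G) ≤ Nat.card G :=
    Subgroup.two_mul_card_le_of_lt
      (lt_of_le_of_ne inf_le_right fun h => hwd (inf_eq_right.mp h hwG))
  have hDH : diagonalSubgroup (Fin 2) K ⊓ (det : GL (Fin 2) K →* Kˣ).ker ⊓ G ≤
      diagonalSubgroup (Fin 2) K ⊓ G := inf_le_inf_right G inf_le_left
  have hAA := Subgroup.card_mul_card_le_of_disjoint_s17 (vecStabilizer_single_inf_le hG 0)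
    (vecStabilizer_single_inf_le hG 1)
    (disjoint_vecStabilizer_single.mono (inf_le_left (b := G)) (inf_le_left (b := G)))
  have hAD := Subgroup.card_mul_card_le_of_disjoint_s17 (vecStabilizer_single_inf_le hG 0) hDH
    (disjoint_vecStabilizer_single_diagonalSubgroup_inf_ker_det.mono (inf_le_left (b := G))
      (inf_le_left (b := G)))
  have hD := Subgroup.card_le_of_le hDH
  have hC := ncard_eigenvalueOneSet_diff_le hG
  have hcount := ncard_eigenvalueOneSet_add_one_le G
  set a := Nat.card ↥(vecStabilizer (Pi.single (0 : Fin 2) (1 : K)) ⊓ G)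
  have ha1 : 1 ≤ a := Nat.card_pos
  obtain ha2 | ha2 := Nat.lt_or_ge a 2
  · omega
  nlinarith

theorem two_mul_ncard_eigenvalueOneSet_le [Finite K]
    (hG : ∀ γ ∈ G, IsDiagOrAntidiag (γ : Matrix (Fin 2) (Fin 2) K))
    (hS : ∃ γ ∈ G, ¬ (γ : Matrix (Fin 2) (Fin 2) K).charpoly.IsRoot 1) :
    2 * (eigenvalueOneSet G).ncard ≤ Nat.card G + 2 := by
  by_cases hGd : G ≤ diagonalSubgroup (Fin 2) K
  · exact two_mul_ncard_eigenvalueOneSet_le_of_le_diagonalSubgroup hGd hS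
  · exact two_mul_ncard_eigenvalueOneSet_le_of_not_le_diagonalSubgroup hG hGd

end SplitCartanNormalizer

theorem stmt_17_general (ℓ : ℕ) [Fact (Nat.Prime ℓ)]
    (G : Subgroup (GL (Fin 2) (ZMod ℓ)))
    (hnorm : ∀ γ ∈ G, Matrix.IsDiag ((γ : Matrix (Fin 2) (Fin 2) (ZMod ℓ))) ∨
      (((γ : Matrix (Fin 2) (Fin 2) (ZMod ℓ))) 0 0 = 0 ∧
        ((γ : Matrix (Fin 2) (Fin 2) (ZMod ℓ))) 1 1 = 0))
    (hne : (Nat.card {γ : G // (Matrix.charpoly (((γ : GL (Fin 2) (ZMod ℓ)) :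
        Matrix (Fin 2) (Fin 2) (ZMod ℓ)))).IsRoot 1} : ℚ) / (Nat.card G : ℚ) ≠ 1) :
    (Nat.card {γ : G // (Matrix.charpoly (((γ : GL (Fin 2) (ZMod ℓ)) :
        Matrix (Fin 2) (Fin 2) (ZMod ℓ)))).IsRoot 1} : ℚ) / (Nat.card G : ℚ) ≤
      1 / 2 + 1 / (Nat.card G : ℚ) := by
  have hG0 : (0 : ℚ) < Nat.card G := by exact_mod_cast Nat.card_pos
  have hS : ∃ γ ∈ G, ¬ (γ : Matrix (Fin 2) (Fin 2) (ZMod ℓ)).charpoly.IsRoot 1 := by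
    by_contra! hall
    apply hne
    rw [Nat.card_congr (Equiv.subtypeUnivEquiv fun γ : G => hall γ γ.2), div_self hG0.ne']
  have hbound : (2 * (eigenvalueOneSet G).ncard : ℚ) ≤ Nat.card G + 2 := by
    exact_mod_cast two_mul_ncard_eigenvalueOneSet_le hnorm hS
  rw [card_subtype_isRoot_charpoly_one, div_le_iff₀ hG0, add_mul, one_div_mul_cancel hG0.ne']
  linarith

theorem stmt_17 (ℓ : ℕ) [Fact (Nat.Prime ℓ)] (hodd : Odd ℓ)
    (G : Subgroup (GL (Fin 2) (ZMod ℓ)))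
    (hnorm : ∀ γ ∈ G, Matrix.IsDiag ((γ : Matrix (Fin 2) (Fin 2) (ZMod ℓ))) ∨
      (((γ : Matrix (Fin 2) (Fin 2) (ZMod ℓ))) 0 0 = 0 ∧
        ((γ : Matrix (Fin 2) (Fin 2) (ZMod ℓ))) 1 1 = 0))
    (hne : (Nat.card {γ : G // (Matrix.charpoly (((γ : GL (Fin 2) (ZMod ℓ)) :
        Matrix (Fin 2) (Fin 2) (ZMod ℓ)))).IsRoot 1} : ℚ) / (Nat.card G : ℚ) ≠ 1) :
    (Nat.card {γ : G // (Matrix.charpoly (((γ : GL (Fin 2) (ZMod ℓ)) :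
        Matrix (Fin 2) (Fin 2) (ZMod ℓ)))).IsRoot 1} : ℚ) / (Nat.card G : ℚ) ≤
      1 / 2 + 1 / (Nat.card G : ℚ) :=
  stmt_17_general ℓ G hnorm hne
end

section
/- For any subgroup G of GL₂(𝔽₂): if the proportion of matrices in G having 1 as an eigenvalue is not 1, then it is at most 2/3. -/
/-!
If `g` has no eigenvalue `1`, neither has `g⁻¹`, and `g⁻¹ ≠ g`: in characteristic two an
involution `A` satisfies `(1 - A) ^ 2 = 2 • (1 - A) = 0`, so `1 - A` is singular. Hence a
subgroup that is not contained in the eigenvalue-`1` locus misses it in at least two of its at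
most `|GL₂(𝔽₂)| = 6` elements, and the proportion is at most `(m - 2) / m ≤ 2 / 3` for `m ≤ 6`.
-/

open Matrix Polynomial

namespace Matrix

variable {n R : Type*} [Fintype n] [DecidableEq n] [CommRing R]

theorem charpoly_isRoot_one_iff (M : Matrix n n R) :
    M.charpoly.IsRoot 1 ↔ (1 - M).det = 0 := by
  rw [IsRoot, eval_charpoly, scalar_apply, diagonal_one]

theorem charpoly_isRoot_one_inv_iff (g : GL n R) :
    ((g⁻¹ : GL n R) : Matrix n n R).charpoly.IsRoot 1 ↔
      (g : Matrix n n R).charpoly.IsRoot 1 := by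
  have h : 1 - ((g⁻¹ : GL n R) : Matrix n n R) =
      -((g⁻¹ : GL n R) * (1 - (g : Matrix n n R))) := by
    simp [mul_sub]
  rw [charpoly_isRoot_one_iff, charpoly_isRoot_one_iff, h, det_neg, det_mul,
    (isUnit_neg_one.pow _).mul_right_eq_zero, (isUnits_det_units g⁻¹).mul_right_eq_zero]

theorem charpoly_isRoot_one_of_mul_self_eq_one [Nonempty n] [IsReduced R] [CharP R 2]
    {A : Matrix n n R} (hA : A * A = 1) : A.charpoly.IsRoot 1 := by
  have hsq : (1 - A) ^ 2 = 0 :=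
    calc (1 - A) ^ 2 = (2 : R) • (1 - A) := by
          rw [two_smul, sq, sub_mul, mul_sub, mul_sub, hA]; noncomm_ring
      _ = 0 := by rw [CharTwo.two_eq_zero, zero_smul]
  rw [charpoly_isRoot_one_iff]
  exact IsNilpotent.eq_zero ⟨2, by rw [← det_pow, hsq, det_zero]⟩

theorem GeneralLinearGroup.inv_ne_self_of_not_charpoly_isRoot_one [Nonempty n] [IsReduced R]
    [CharP R 2] {g : GL n R} (hg : ¬(g : Matrix n n R).charpoly.IsRoot 1) : g⁻¹ ≠ g := by
  intro h
  refine hg (charpoly_isRoot_one_of_mul_self_eq_one ?_)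
  rw [← Units.val_mul, ← Units.val_one, ← inv_mul_cancel g, h]

end Matrix

theorem Nat.card_subtype_add_two_le {α : Type*} [Finite α] {p : α → Prop} {a b : α}
    (hab : a ≠ b) (ha : ¬p a) (hb : ¬p b) : Nat.card {x // p x} + 2 ≤ Nat.card α := by
  classical
  have := Fintype.ofFinite α
  have hdisj : Disjoint (Finset.univ.filter p) {a, b} := by
    refine Finset.disjoint_left.2 fun x hx hx' => ?_
    rw [Finset.mem_filter] at hx
    rw [Finset.mem_insert, Finset.mem_singleton] at hx'
    rcases hx' with rfl | rfl
    exacts [ha hx.2, hb hx.2]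
  rw [Nat.card_eq_fintype_card, Nat.card_eq_fintype_card, Fintype.card_subtype,
    ← Finset.card_univ, ← Finset.card_pair hab, ← Finset.card_union_of_disjoint hdisj]
  exact Finset.card_le_univ _

theorem div_le_two_thirds_of_add_two_le {k m : ℕ} (hk : k + 2 ≤ m) (hm : m ≤ 6) :
    (k : ℚ) / m ≤ 2 / 3 := by
  rw [div_le_div_iff₀ (by exact_mod_cast (by omega : 0 < m)) (by norm_num)]
  exact_mod_cast (by omega : k * 3 ≤ 2 * m)

theorem stmt_18 (G : Subgroup (GL (Fin 2) (ZMod 2)))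
    (hne : (Nat.card {γ : G // (Matrix.charpoly (((γ : GL (Fin 2) (ZMod 2)) :
        Matrix (Fin 2) (Fin 2) (ZMod 2)))).IsRoot 1} : ℚ) / (Nat.card G : ℚ) ≠ 1) :
    (Nat.card {γ : G // (Matrix.charpoly (((γ : GL (Fin 2) (ZMod 2)) :
        Matrix (Fin 2) (Fin 2) (ZMod 2)))).IsRoot 1} : ℚ) / (Nat.card G : ℚ) ≤ 2 / 3 := by
  have hG : Nat.card G ≤ 6 := by
    have hGL : Nat.card (GL (Fin 2) (ZMod 2)) = 6 := by
      rw [card_GL_field, ZMod.card]; decide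
    exact Nat.le_of_dvd (by norm_num) (hGL ▸ G.card_subgroup_dvd_card)
  obtain ⟨γ, hγ⟩ : ∃ γ : G, ¬((γ : GL (Fin 2) (ZMod 2)) :
      Matrix (Fin 2) (Fin 2) (ZMod 2)).charpoly.IsRoot 1 := by
    by_contra! h
    refine hne ?_
    rw [Nat.card_congr (Equiv.subtypeUnivEquiv h), div_self]
    exact_mod_cast Nat.card_pos.ne'
  have hγinv : γ⁻¹ ≠ γ := fun h =>
    GeneralLinearGroup.inv_ne_self_of_not_charpoly_isRoot_one hγ
      (by exact_mod_cast congrArg Subtype.val h)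
  refine div_le_two_thirds_of_add_two_le (Nat.card_subtype_add_two_le hγinv.symm hγ ?_) hG
  rwa [Subgroup.coe_inv, charpoly_isRoot_one_inv_iff]
end

section
/- Let ℓ be an odd prime and G ⊆ GL₂(𝔽_ℓ) a subgroup whose image Ḡ in PGL₂(𝔽_ℓ) is isomorphic to the alternating group A₄. Then the proportion of matrices in G having an eigenvalue in 𝔽_ℓ lies in the set {1/12, 1/3, 3/4, 1}. -/
/-!
Having an eigenvalue in `K` is unchanged by nonzero scalars, so it is a property of the image in
`PGL n K`, and the proportion of such elements of `G` equals the proportion in `Ḡ ≃ A₄`. There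
the set of such elements contains `1`, is a union of conjugacy classes, and is closed under
squaring, which swaps the two conjugacy classes of `3`-cycles. Hence it is `{1}`, the Klein
four-group, `1` together with all `3`-cycles, or `A₄`: of sizes `1, 4, 9, 12`.
-/

section Counting

variable {G H : Type*} [Group G] [Group H]

theorem MonoidHom.card_preimage_of_surjective (f : G →* H) (hf : Function.Surjective f)
    (t : Set H) : Nat.card (f ⁻¹' t) = Nat.card f.ker * Nat.card t := by
  let e := QuotientGroup.quotientKerEquivOfSurjective f hf
  have hfe : f ⁻¹' t = QuotientGroup.mk ⁻¹' (e ⁻¹' t) := rfl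
  rw [hfe, QuotientGroup.card_preimage_mk,
    Nat.card_preimage_of_injective e.injective (by simp [e.surjective.range_eq])]

theorem MonoidHom.card_subtype_comp_div_card [Finite G] (f : G →* H)
    (hf : Function.Surjective f) (p : H → Prop) :
    (Nat.card {g // p (f g)} : ℚ) / Nat.card G = Nat.card {h // p h} / Nat.card H := by
  have hp : Nat.card {g // p (f g)} = Nat.card f.ker * Nat.card {h // p h} :=
    f.card_preimage_of_surjective hf {h | p h}
  have hG : Nat.card G = Nat.card f.ker * Nat.card H := by
    simpa using f.card_preimage_of_surjective hf Set.univ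
  have hker : (Nat.card f.ker : ℚ) ≠ 0 := Nat.cast_ne_zero.2 Nat.card_pos.ne'
  rw [hp, hG, Nat.cast_mul, Nat.cast_mul, mul_div_mul_left _ _ hker]

end Counting

section ProjectiveEigenvalue

variable {n K : Type*} [Fintype n] [DecidableEq n] [Field K]

theorem spectrum_nonempty_mul_of_mem_center {g z : GL n K} (hz : z ∈ Subgroup.center (GL n K)) :
    (spectrum K ((g * z : GL n K) : Matrix n n K)).Nonempty ↔
      (spectrum K (g : Matrix n n K)).Nonempty := by
  rw [Matrix.GeneralLinearGroup.center_eq_range_scalar] at hz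
  obtain ⟨c, rfl⟩ := hz
  have hgc : ((g * Matrix.GeneralLinearGroup.scalar n c : GL n K) : Matrix n n K) =
      c • (g : Matrix n n K) := by
    ext i j
    simp [Units.smul_def, mul_comm]
  rw [hgc, spectrum.unit_smul_eq_smul, Set.smul_set_nonempty]

variable (n K) in
def HasProjEigenvalue : GL n K ⧸ Subgroup.center (GL n K) → Prop :=
  Quotient.lift (fun g : GL n K => (spectrum K (g : Matrix n n K)).Nonempty) fun g h hgh => by
    rw [← mul_inv_cancel_left g h]
    exact propext (spectrum_nonempty_mul_of_mem_center (QuotientGroup.leftRel_apply.1 hgh)).symm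

theorem hasProjEigenvalue_one [Nonempty n] : HasProjEigenvalue n K 1 := by
  show (spectrum K (1 : Matrix n n K)).Nonempty
  simp [spectrum.one_eq]

theorem HasProjEigenvalue.conj {x : GL n K ⧸ Subgroup.center (GL n K)}
    (hx : HasProjEigenvalue n K x) (y : GL n K ⧸ Subgroup.center (GL n K)) :
    HasProjEigenvalue n K (y * x * y⁻¹) := by
  induction x using QuotientGroup.induction_on with | H x => ?_
  induction y using QuotientGroup.induction_on with | H y => ?_
  change (spectrum K ((y * x * y⁻¹ : GL n K) : Matrix n n K)).Nonempty
  rw [Units.val_mul, Units.val_mul, spectrum.units_conjugate]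
  exact hx

theorem HasProjEigenvalue.mul_self {x : GL n K ⧸ Subgroup.center (GL n K)}
    (hx : HasProjEigenvalue n K x) : HasProjEigenvalue n K (x * x) := by
  induction x using QuotientGroup.induction_on with | H x => ?_
  obtain ⟨k, hk⟩ : (spectrum K (x : Matrix n n K)).Nonempty := hx
  refine ⟨k ^ 2, ?_⟩
  simpa [sq] using spectrum.pow_mem_pow _ 2 hk

end ProjectiveEigenvalue

namespace AlternatingGroupFin4

local notation "A₄" => alternatingGroup (Fin 4)

def doubleTransposition : A₄ :=
  ⟨Equiv.swap 0 1 * Equiv.swap 2 3, Equiv.Perm.mem_alternatingGroup.2 (by decide)⟩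

def threeCycle : A₄ :=
  ⟨Equiv.swap 0 1 * Equiv.swap 1 2, Equiv.Perm.mem_alternatingGroup.2 (by decide)⟩

theorem eq_one_or_isConj (a : A₄) :
    a = 1 ∨ IsConj doubleTransposition a ∨ IsConj threeCycle a ∨ IsConj threeCycle⁻¹ a := by
  revert a; decide

theorem threeCycle_mul_self : threeCycle * threeCycle = threeCycle⁻¹ := by decide

theorem card_filter_union_conjClasses_mem (s t : Bool) :
    (Finset.univ.filter fun a : A₄ => a = 1 ∨ (s ∧ IsConj doubleTransposition a) ∨
      (t ∧ (IsConj threeCycle a ∨ IsConj threeCycle⁻¹ a))).card ∈ ({1, 4, 9, 12} : Finset ℕ) := by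
  revert s t; decide

theorem card_div_card_mem (p : A₄ → Prop) (one : p 1) (conj : ∀ a, p a → ∀ b, p (b * a * b⁻¹))
    (mul_self : ∀ a, p a → p (a * a)) :
    (Nat.card {a // p a} : ℚ) / Nat.card A₄ ∈ ({1 / 12, 1 / 3, 3 / 4, 1} : Set ℚ) := by
  classical
  have of_isConj {x a : A₄} (h : IsConj x a) (ha : p a) : p x := by
    obtain ⟨c, rfl⟩ := isConj_iff.1 h
    simpa [mul_assoc] using conj _ ha c⁻¹
  have three_iff : p threeCycle ↔ p threeCycle⁻¹ :=
    ⟨fun h => threeCycle_mul_self ▸ mul_self _ h,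
      fun h => by simpa [← mul_inv_rev, threeCycle_mul_self] using mul_self _ h⟩
  have hp : ∀ a, p a ↔ a = 1 ∨ (decide (p doubleTransposition) ∧ IsConj doubleTransposition a) ∨
      (decide (p threeCycle) ∧ (IsConj threeCycle a ∨ IsConj threeCycle⁻¹ a)) := by
    intro a
    simp only [decide_eq_true_eq]
    constructor
    · intro ha
      rcases eq_one_or_isConj a with rfl | h | h | h
      · exact .inl rfl
      · exact .inr (.inl ⟨of_isConj h ha, h⟩)
      · exact .inr (.inr ⟨of_isConj h ha, .inl h⟩)
      · exact .inr (.inr ⟨three_iff.2 (of_isConj h ha), .inr h⟩)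
    · rintro (rfl | ⟨hx, h⟩ | ⟨hx, h | h⟩)
      · exact one
      all_goals obtain ⟨c, rfl⟩ := isConj_iff.1 h
      · exact conj _ hx c
      · exact conj _ hx c
      · exact conj _ (three_iff.1 hx) c
  have hcard := card_filter_union_conjClasses_mem (decide (p doubleTransposition))
    (decide (p threeCycle))
  rw [← Fintype.card_subtype, Fintype.card_congr (Equiv.subtypeEquivRight hp).symm,
    ← Nat.card_eq_fintype_card] at hcard
  have h12 : Nat.card A₄ = 12 := by rw [Nat.card_eq_fintype_card]; decide
  rw [h12]
  simp only [Finset.mem_insert, Finset.mem_singleton] at hcard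
  rcases hcard with h | h | h | h <;> rw [h] <;> norm_num

end AlternatingGroupFin4

open AlternatingGroupFin4 in
theorem stmt_19_general (ℓ : ℕ) [Fact (Nat.Prime ℓ)]
    (G : Subgroup (GL (Fin 2) (ZMod ℓ)))
    (hA4 : Nonempty
      ((G.map (QuotientGroup.mk' (Subgroup.center (GL (Fin 2) (ZMod ℓ))))) ≃*
        alternatingGroup (Fin 4))) :
    (Nat.card {γ : G // ∃ a : ZMod ℓ,
        (Matrix.charpoly (((γ : GL (Fin 2) (ZMod ℓ)) :
          Matrix (Fin 2) (Fin 2) (ZMod ℓ)))).IsRoot a} : ℚ) / (Nat.card G : ℚ) ∈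
      ({1 / 12, 1 / 3, 3 / 4, 1} : Set ℚ) := by
  obtain ⟨e⟩ := hA4
  let φ := (QuotientGroup.mk' (Subgroup.center (GL (Fin 2) (ZMod ℓ)))).subgroupMap G
  let p : G.map (QuotientGroup.mk' (Subgroup.center (GL (Fin 2) (ZMod ℓ)))) → Prop :=
    fun x => HasProjEigenvalue (Fin 2) (ZMod ℓ) x
  have hroot : Nat.card {γ : G // ∃ a : ZMod ℓ,
      (((γ : GL (Fin 2) (ZMod ℓ)) : Matrix (Fin 2) (Fin 2) (ZMod ℓ))).charpoly.IsRoot a} =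
      Nat.card {γ : G // p (φ γ)} :=
    Nat.card_congr <| Equiv.subtypeEquivRight fun γ =>
      exists_congr fun _ => Matrix.mem_spectrum_iff_isRoot_charpoly.symm
  have htransport : Nat.card {x // p x} = Nat.card {a // p (e.symm a)} :=
    Nat.card_congr <| e.toEquiv.subtypeEquiv fun x => by simp
  rw [hroot, φ.card_subtype_comp_div_card (MonoidHom.subgroupMap_surjective _ _) p, htransport,
    Nat.card_congr e.toEquiv]
  exact card_div_card_mem _ (by simpa [p] using hasProjEigenvalue_one)
    (fun _ ha b => by simpa [p] using ha.conj (e.symm b : GL (Fin 2) (ZMod ℓ) ⧸ _))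
    (fun _ ha => by simpa [p] using ha.mul_self)

theorem stmt_19 (ℓ : ℕ) [Fact (Nat.Prime ℓ)] (hodd : Odd ℓ)
    (G : Subgroup (GL (Fin 2) (ZMod ℓ)))
    (hA4 : Nonempty
      ((G.map (QuotientGroup.mk' (Subgroup.center (GL (Fin 2) (ZMod ℓ))))) ≃*
        alternatingGroup (Fin 4))) :
    (Nat.card {γ : G // ∃ a : ZMod ℓ,
        (Matrix.charpoly (((γ : GL (Fin 2) (ZMod ℓ)) :
          Matrix (Fin 2) (Fin 2) (ZMod ℓ)))).IsRoot a} : ℚ) / (Nat.card G : ℚ) ∈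
      ({1 / 12, 1 / 3, 3 / 4, 1} : Set ℚ) :=
  stmt_19_general ℓ G hA4
end
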